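/- arXiv:2511.02081 — 5 statements merged into one kernel-verified Lean document; each statement's English description precedes it below -/
import Mathlib

section
/- Let D_1 = (V_1, A_1) be a Steiner rooted k-arc-connected 3-regular directed graph with root r ∈ V_1 and set of terminals S = {s_1, s_2} ⊆ V_1 − r. Assume that a vertex v ∈ V_1 \ (S + r) has two incident arcs, e and f, such that either both are incoming at v or both are outgoing at v, and e leaves a tight s_1-cut while f leaves a tight s_2-cut. Let D_2 = (V_2, A_2) be an (S + r)-fixed directed topological minor of D_1, with corresponding mapping ψ : V_2 → V_1 and collection of paths {P_e : e ∈ A_2}, and assume that D_2 is itself a Steiner rooted k-arc-connected 3-regular directed graph. Then v is contained in the image of ψ. -/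
/-- The interior (list of internal vertices) of a path given by its vertex sequence. -/
def pathInterior {α : Type} (p : List α) : List α := (p.drop 1).dropLast

/-- Two paths, given by their vertex sequences, are internally vertex-disjoint:
no internal vertex of one of them occurs on the other. -/
def IntDisjoint {α : Type} (p q : List α) : Prop :=
  (∀ x ∈ pathInterior p, x ∉ q) ∧ (∀ x ∈ pathInterior q, x ∉ p)

/-- A finite loopless directed multigraph on vertex set `verts`; the arcs are
recorded as a multiset of ordered pairs `(tail, head)`, so that parallel arcs
are allowed. -/
structure MDigraph (α : Type) where
  verts : Finset α
  arcs : Multiset (α × α)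
  tail_mem : ∀ e ∈ arcs, e.1 ∈ verts
  head_mem : ∀ e ∈ arcs, e.2 ∈ verts
  loopless : ∀ e ∈ arcs, e.1 ≠ e.2

namespace MDigraph

variable {α : Type} [DecidableEq α]

/-- `p` is the vertex sequence of a directed path in `D` from `u` to `v`. -/
def IsDipath (D : MDigraph α) (p : List α) (u v : α) : Prop :=
  p.Nodup ∧ p.head? = some u ∧ p.getLast? = some v ∧
    (∀ x ∈ p, x ∈ D.verts) ∧ List.Chain' (fun x y => (x, y) ∈ D.arcs) p

/-- The multiset of arcs traversed by a directed path given by its vertex sequence. -/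
def pathArcs (p : List α) : Multiset (α × α) := ↑(p.zip p.tail)

/-- There exist `k` pairwise arc-disjoint directed paths from `u` to `v` in `D`
(each copy of an arc may be used by at most one of the paths). -/
def HasArcDisjointPaths (D : MDigraph α) (u v : α) (k : ℕ) : Prop :=
  ∃ P : Fin k → List α, (∀ i, D.IsDipath (P i) u v) ∧
    (∑ i : Fin k, pathArcs (P i)) ≤ D.arcs

/-- `D` is Steiner rooted `k`-arc-connected with root `r` and terminal set `S`:
for every terminal `s ∈ S` there are `k` pairwise arc-disjoint directed `r`-`s` paths. -/
def SteinerRooted (D : MDigraph α) (r : α) (S : Finset α) (k : ℕ) : Prop :=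
  ∀ s ∈ S, D.HasArcDisjointPaths r s k

/-- The in-degree of a vertex. -/
def inDeg (D : MDigraph α) (v : α) : ℕ := (D.arcs.filter (fun e => e.2 = v)).card

/-- The out-degree of a vertex. -/
def outDeg (D : MDigraph α) (v : α) : ℕ := (D.arcs.filter (fun e => e.1 = v)).card

/-- The number of arcs leaving the vertex set `X` (tail in `X`, head outside `X`). -/
def outDegOf (D : MDigraph α) (X : Finset α) : ℕ :=
  (D.arcs.filter (fun e => e.1 ∈ X ∧ e.2 ∉ X)).card

/-- `D` is `3`-regular with respect to root `r`, terminal set `S` and connectivity `k`: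
the root has in-degree `0` and out-degree `k`, every terminal has in-degree `k` and
out-degree `0`, and every other vertex has in-degree plus out-degree equal to `3`. -/
def ThreeRegular (D : MDigraph α) (r : α) (S : Finset α) (k : ℕ) : Prop :=
  D.inDeg r = 0 ∧ D.outDeg r = k ∧ (∀ s ∈ S, D.inDeg s = k ∧ D.outDeg s = 0) ∧
    ∀ v ∈ D.verts, v ≠ r → v ∉ S → D.inDeg v + D.outDeg v = 3

/-- Delete (one copy of) the arc `e` from `D`. -/
def delArc (D : MDigraph α) (e : α × α) : MDigraph α where
  verts := D.verts
  arcs := D.arcs.erase e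
  tail_mem := fun a ha => D.tail_mem a (Multiset.mem_of_mem_erase ha)
  head_mem := fun a ha => D.head_mem a (Multiset.mem_of_mem_erase ha)
  loopless := fun a ha => D.loopless a (Multiset.mem_of_mem_erase ha)

/-- `D` is minimally Steiner rooted `k`-arc-connected: it is Steiner rooted
`k`-arc-connected but deleting any arc destroys this property. -/
def MinSteinerRooted (D : MDigraph α) (r : α) (S : Finset α) (k : ℕ) : Prop :=
  D.SteinerRooted r S k ∧ ∀ e ∈ D.arcs, ¬ (D.delArc e).SteinerRooted r S k

/-- `U` is a tight `s`-cut: `r ∈ U`, `s ∉ U`, and exactly `k` arcs leave `U`. -/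
def IsTightCut (D : MDigraph α) (r s : α) (k : ℕ) (U : Finset α) : Prop :=
  r ∈ U ∧ s ∉ U ∧ D.outDegOf U = k

/-- The multiset of arcs of a directed cycle given by its vertex sequence. -/
def cycleArcs (c : List α) : Multiset (α × α) := ↑(c.zip (c.rotate 1))

/-- `c` is the vertex sequence of a directed cycle in `D`. -/
def IsDicycle (D : MDigraph α) (c : List α) : Prop :=
  c.Nodup ∧ 2 ≤ c.length ∧ cycleArcs c ≤ D.arcs

end MDigraph

namespace MDigraph

variable {α : Type} [DecidableEq α]

/-- `ψ` and `L` witness that `D₂` is a `W`-fixed directed topological minor of `D₁`: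
`ψ` is an injective map of the vertices of `D₂` into those of `D₁` fixing `W`, and `L`
assigns to every arc `e = (u, v)` of `D₂` (with multiplicity) a directed `ψ u`-`ψ v`
path in `D₁`, these paths being pairwise internally vertex-disjoint, arc-disjoint and
internally disjoint from `W`. -/
def FixedTopMinorWitness (D₁ D₂ : MDigraph α) (W : Set α)
    (ψ : α → α) (L : List ((α × α) × List α)) : Prop :=
  Set.InjOn ψ ↑D₂.verts ∧ (∀ x ∈ D₂.verts, ψ x ∈ D₁.verts) ∧
    (∀ w ∈ W, ψ w = w) ∧
    (↑(L.map Prod.fst) : Multiset (α × α)) = D₂.arcs ∧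
    (∀ ep ∈ L, D₁.IsDipath ep.2 (ψ ep.1.1) (ψ ep.1.2)) ∧
    (∀ ep ∈ L, ∀ z ∈ pathInterior ep.2, z ∉ W) ∧
    List.Pairwise (fun ep fq => IntDisjoint ep.2 fq.2) L ∧
    (L.map fun ep => pathArcs ep.2).sum ≤ D₁.arcs

/-- `D₂` is a `W`-fixed directed topological minor of `D₁`. -/
def IsFixedTopMinor (D₁ D₂ : MDigraph α) (W : Set α) : Prop :=
  ∃ ψ L, FixedTopMinorWitness D₁ D₂ W ψ L

end MDigraph

/-!
Suppose `v` is not a branch vertex of the minor. Then at most one of the paths realising the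
arcs of `D₂` passes through `v`, and only as an interior vertex, so the paths use at most one
arc entering and at most one arc leaving `v`. On the other hand, every arc leaving a tight
`sᵢ`-cut `U` of `D₁` lies on one of these paths: the pullback of `U` along `ψ` is an
`sᵢ`-cut of `D₂`, so at least `k` arcs of `D₂` leave it, and the paths realising them are
arc-disjoint and each leaves `U`, which only `k` arcs of `D₁` do. Hence `e` and `f`, two
arcs both entering or both leaving `v`, are both used: a contradiction.
-/

theorem List.exists_mem_zip_tail_of_head?_of_getLast? {α : Type} {P : α → Prop} :
    ∀ {l : List α} {a b : α}, l.head? = some a → l.getLast? = some b → P a → ¬ P b →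
      ∃ x ∈ l.zip l.tail, P x.1 ∧ ¬ P x.2
  | [x], a, b, ha, hb, hPa, hPb => by simp_all
  | x :: y :: l, a, b, ha, hb, hPa, hPb => by
    obtain rfl : x = a := by simpa using ha
    by_cases hPy : P y
    · obtain ⟨z, hz, hz₁, hz₂⟩ :=
        exists_mem_zip_tail_of_head?_of_getLast? (l := y :: l) rfl (by simpa using hb) hPy hPb
      exact ⟨z, by simp_all, hz₁, hz₂⟩
    · exact ⟨(x, y), by simp, hPa, hPy⟩

theorem List.countP_le_sum_map {β : Type} {l : List β} {q : β → Bool} {g : β → ℕ}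
    (h : ∀ x ∈ l, q x → 1 ≤ g x) : l.countP q ≤ (l.map g).sum := by
  induction l with
  | nil => simp
  | cons x l ih =>
    simp only [List.forall_mem_cons] at h
    simp only [List.countP_cons, List.map_cons, List.sum_cons]
    have := ih h.2
    split <;> grind

theorem Multiset.le_of_filter_le_of_filter_le {α : Type} [DecidableEq α] {p q : α → Prop}
    [DecidablePred p] [DecidablePred q] {s t u : Multiset α} (hst : s ≤ t)
    (hs : ∀ x ∈ s, p x ∨ q x) (hp : t.filter p ≤ u) (hq : t.filter q ≤ u) : s ≤ u := by
  rw [Multiset.le_iff_count] at hst hp hq ⊢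
  intro x
  by_cases hx : x ∈ s
  · rcases hs x hx with h | h
    · exact (hst x).trans ((Multiset.count_filter_of_pos h).symm.trans_le (hp x))
    · exact (hst x).trans ((Multiset.count_filter_of_pos h).symm.trans_le (hq x))
  · simp [Multiset.count_eq_zero_of_notMem hx]

theorem mem_pathInterior_of_ne {α : Type} {p : List α} {a b v : α} (ha : p.head? = some a)
    (hb : p.getLast? = some b) (hv : v ∈ p) (hva : v ≠ a) (hvb : v ≠ b) :
    v ∈ pathInterior p := by
  obtain _ | ⟨x, l⟩ := p
  · simp at hv
  obtain rfl : x = a := by simpa using ha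
  have hvl : v ∈ l := by simpa [hva] using hv
  have hb' : l.getLast? = some b := by
    obtain _ | ⟨y, l⟩ := l
    · simp at hvl
    · simpa using hb
  exact List.mem_dropLast_of_mem_of_ne_getLast? hvl (by simpa [hb'] using hvb)

theorem sum_count_le_one_of_pairwise_intDisjoint {α : Type} [DecidableEq α] {v : α} :
    ∀ {P : List (List α)}, (∀ p ∈ P, p.Nodup) → (∀ p ∈ P, v ∈ p → v ∈ pathInterior p) →
      P.Pairwise IntDisjoint → (P.map (List.count v)).sum ≤ 1
  | [], _, _, _ => by simp
  | p :: P, hnd, hint, hpw => by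
    simp only [List.forall_mem_cons, List.pairwise_cons] at hnd hint hpw
    simp only [List.map_cons, List.sum_cons]
    by_cases hv : v ∈ p
    · have hrest : (P.map (List.count v)).sum = 0 :=
        List.sum_eq_zero fun n hn => by
          obtain ⟨q, hq, rfl⟩ := List.mem_map.mp hn
          exact List.count_eq_zero.mpr ((hpw.1 q hq).1 v (hint.1 hv))
      have := List.nodup_iff_count_le_one.mp hnd.1 v
      omega
    · rw [List.count_eq_zero.mpr hv, zero_add]
      exact sum_count_le_one_of_pairwise_intDisjoint hnd.2 hint.2 hpw.2

namespace MDigraph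

variable {α : Type}

theorem map_fst_pathArcs_le (p : List α) : (pathArcs p).map Prod.fst ≤ (p : Multiset α) := by
  rw [pathArcs, Multiset.map_coe, Multiset.coe_le, List.zip_eq_zip_take_min,
    List.map_fst_zip (by simp)]
  exact (List.take_sublist _ _).subperm

theorem map_snd_pathArcs_le (p : List α) : (pathArcs p).map Prod.snd ≤ (p : Multiset α) := by
  rw [pathArcs, Multiset.map_coe, Multiset.coe_le, List.zip_eq_zip_take_min,
    List.map_snd_zip (by simp)]
  exact ((List.take_sublist _ _).trans (List.tail_sublist p)).subperm

variable [DecidableEq α]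

def Leaves (X : Finset α) (a : α × α) : Prop := a.1 ∈ X ∧ a.2 ∉ X

instance (X : Finset α) : DecidablePred (Leaves X) :=
  fun a => inferInstanceAs (Decidable (a.1 ∈ X ∧ a.2 ∉ X))

theorem outDegOf_eq_countP (D : MDigraph α) (X : Finset α) :
    D.outDegOf X = D.arcs.countP (Leaves X) :=
  (Multiset.countP_eq_card_filter _ _).symm

theorem countP_leaves_pathArcs_pos {p : List α} {a b : α} {X : Finset α}
    (ha : p.head? = some a) (hb : p.getLast? = some b) (haX : a ∈ X) (hbX : b ∉ X) :
    0 < (pathArcs p).countP (Leaves X) := by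
  obtain ⟨x, hx, hx₁, hx₂⟩ :=
    List.exists_mem_zip_tail_of_head?_of_getLast? (P := (· ∈ X)) ha hb haX hbX
  exact Multiset.countP_pos.mpr ⟨x, hx, hx₁, hx₂⟩

/-- The easy direction of Menger's theorem. -/
theorem HasArcDisjointPaths.le_outDegOf {D : MDigraph α} {u v : α} {k : ℕ} {X : Finset α}
    (h : D.HasArcDisjointPaths u v k) (hu : u ∈ X) (hv : v ∉ X) : k ≤ D.outDegOf X := by
  obtain ⟨P, hP, hle⟩ := h
  calc k = ∑ _i : Fin k, 1 := by simp
    _ ≤ ∑ i, (pathArcs (P i)).countP (Leaves X) :=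
      Finset.sum_le_sum fun i _ => countP_leaves_pathArcs_pos (hP i).2.1 (hP i).2.2.1 hu hv
    _ = (∑ i, pathArcs (P i)).countP (Leaves X) :=
      (map_sum (Multiset.countPAddMonoidHom (Leaves X)) (fun i => pathArcs (P i)) _).symm
    _ ≤ D.outDegOf X := (outDegOf_eq_countP D X).symm ▸ Multiset.countP_le_of_le _ hle

def routedArcs (L : List ((α × α) × List α)) : Multiset (α × α) :=
  (L.map fun ep => pathArcs ep.2).sum

theorem outDegOf_le_countP_leaves_routedArcs {D₁ D₂ : MDigraph α} {ψ : α → α}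
    {L : List ((α × α) × List α)} {X U : Finset α}
    (harcs : (↑(L.map Prod.fst) : Multiset (α × α)) = D₂.arcs)
    (hdip : ∀ ep ∈ L, D₁.IsDipath ep.2 (ψ ep.1.1) (ψ ep.1.2))
    (hX : ∀ x ∈ D₂.verts, x ∈ X ↔ ψ x ∈ U) :
    D₂.outDegOf X ≤ (routedArcs L).countP (Leaves U) := by
  have hsum : (routedArcs L).countP (Leaves U)
      = (L.map fun ep => (pathArcs ep.2).countP (Leaves U)).sum :=
    (map_list_sum (Multiset.countPAddMonoidHom (Leaves U)) _).trans (by rw [List.map_map]; rfl)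
  rw [outDegOf_eq_countP, ← harcs, Multiset.coe_countP, List.countP_map, hsum]
  refine List.countP_le_sum_map fun ep hep hleaves => ?_
  have hmem : ep.1 ∈ D₂.arcs := harcs ▸ Multiset.mem_coe.mpr (List.mem_map_of_mem hep)
  obtain ⟨h₁, h₂⟩ : Leaves X ep.1 := by simpa using hleaves
  exact countP_leaves_pathArcs_pos (hdip ep hep).2.1 (hdip ep hep).2.2.1
    ((hX _ (D₂.tail_mem _ hmem)).mp h₁) fun h => h₂ ((hX _ (D₂.head_mem _ hmem)).mpr h)

theorem filter_leaves_le_routedArcs {D₁ D₂ : MDigraph α} {W : Set α} {ψ : α → α}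
    {L : List ((α × α) × List α)} {r s : α} {k : ℕ} {U : Finset α}
    (hwit : FixedTopMinorWitness D₁ D₂ W ψ L) (hrW : r ∈ W) (hsW : s ∈ W) (hr : r ∈ D₂.verts)
    (hU : D₁.IsTightCut r s k U) (hcon : D₂.HasArcDisjointPaths r s k) :
    D₁.arcs.filter (Leaves U) ≤ routedArcs L := by
  obtain ⟨-, -, hfix, harcs, hdip, -, -, hle⟩ := hwit
  obtain ⟨hrU, hsU, hk⟩ := hU
  set X := D₂.verts.filter (ψ · ∈ U)
  have hX : ∀ x ∈ D₂.verts, x ∈ X ↔ ψ x ∈ U := by simp_all [X]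
  have hrX : r ∈ X := by simp [X, hr, hfix r hrW, hrU]
  have hsX : s ∉ X := by simp [X, hfix s hsW, hsU]
  have hused : (routedArcs L).filter (Leaves U) ≤ D₁.arcs.filter (Leaves U) :=
    Multiset.filter_le_filter _ hle
  have hcard : Multiset.card (D₁.arcs.filter (Leaves U))
      ≤ Multiset.card ((routedArcs L).filter (Leaves U)) :=
    calc _ = k := hk
      _ ≤ D₂.outDegOf X := hcon.le_outDegOf hrX hsX
      _ ≤ (routedArcs L).countP (Leaves U) := outDegOf_le_countP_leaves_routedArcs harcs hdip hX
      _ = _ := Multiset.countP_eq_card_filter _ _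
  rw [← Multiset.eq_of_le_of_card_le hused hcard]
  exact Multiset.filter_le _ _

theorem count_map_routedArcs_le_one {D₁ D₂ : MDigraph α} {W : Set α} {ψ : α → α}
    {L : List ((α × α) × List α)} {v : α} {π : α × α → α}
    (hπ : ∀ p : List α, (pathArcs p).map π ≤ p) (hwit : FixedTopMinorWitness D₁ D₂ W ψ L)
    (hv : ∀ x ∈ D₂.verts, ψ x ≠ v) : ((routedArcs L).map π).count v ≤ 1 := by
  obtain ⟨-, -, -, harcs, hdip, -, hpw, -⟩ := hwit
  have hint : ∀ ep ∈ L, v ∈ ep.2 → v ∈ pathInterior ep.2 := fun ep hep hvp => by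
    have hmem : ep.1 ∈ D₂.arcs := harcs ▸ Multiset.mem_coe.mpr (List.mem_map_of_mem hep)
    exact mem_pathInterior_of_ne (hdip ep hep).2.1 (hdip ep hep).2.2.1 hvp
      (hv _ (D₂.tail_mem _ hmem)).symm (hv _ (D₂.head_mem _ hmem)).symm
  calc ((routedArcs L).map π).count v
      = (L.map fun ep => ((pathArcs ep.2).map π).count v).sum :=
        (map_list_sum ((Multiset.countAddMonoidHom v).comp (Multiset.mapAddMonoidHom π)) _).trans
          (by rw [List.map_map]; rfl)
    _ ≤ (L.map fun ep => ep.2.count v).sum :=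
        List.sum_le_sum fun ep _ => by simpa using Multiset.count_le_of_le v (hπ ep.2)
    _ ≤ 1 := by
        have h := sum_count_le_one_of_pairwise_intDisjoint (P := L.map Prod.snd)
          (List.forall_mem_map.mpr fun ep hep => (hdip ep hep).1) (List.forall_mem_map.mpr hint)
          (List.pairwise_map.mpr hpw)
        rwa [List.map_map] at h

theorem not_pair_le_routedArcs {D₁ D₂ : MDigraph α} {W : Set α} {ψ : α → α}
    {L : List ((α × α) × List α)} {v : α} {π : α × α → α} {e f : α × α}
    (hπ : ∀ p : List α, (pathArcs p).map π ≤ p) (hwit : FixedTopMinorWitness D₁ D₂ W ψ L)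
    (hv : ∀ x ∈ D₂.verts, ψ x ≠ v) (he : π e = v) (hf : π f = v) :
    ¬ ({e, f} : Multiset (α × α)) ≤ routedArcs L := fun h => by
  have h₂ := Multiset.count_le_of_le v (Multiset.map_le_map (f := π) h)
  have h₁ := count_map_routedArcs_le_one hπ hwit hv
  simp [he, hf] at h₂
  omega

end MDigraph

theorem essential_vertex_in_image_general {α : Type} [DecidableEq α]
    (D₁ D₂ : MDigraph α) (r s₁ s₂ v : α) (k : ℕ)
    (e f : α × α)
    (hef : ({e, f} : Multiset (α × α)) ≤ D₁.arcs)
    (hinc : (e.2 = v ∧ f.2 = v) ∨ (e.1 = v ∧ f.1 = v))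
    (hcut₁ : ∃ U : Finset α, D₁.IsTightCut r s₁ k U ∧ e.1 ∈ U ∧ e.2 ∉ U)
    (hcut₂ : ∃ U : Finset α, D₁.IsTightCut r s₂ k U ∧ f.1 ∈ U ∧ f.2 ∉ U)
    (ψ : α → α) (L : List ((α × α) × List α))
    (hWsub : ({s₁, s₂, r} : Set α) ⊆ ↑D₂.verts)
    (hwit : MDigraph.FixedTopMinorWitness D₁ D₂ {s₁, s₂, r} ψ L)
    (hcon₂ : D₂.SteinerRooted r {s₁, s₂} k) :
    ∃ x ∈ D₂.verts, ψ x = v := by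
  open MDigraph in
  by_contra! hv
  obtain ⟨U₁, hU₁, he₁, he₂⟩ := hcut₁
  obtain ⟨U₂, hU₂, hf₁, hf₂⟩ := hcut₂
  have hr : r ∈ D₂.verts := hWsub (by simp)
  have hused : ({e, f} : Multiset (α × α)) ≤ routedArcs L :=
    Multiset.le_of_filter_le_of_filter_le hef (p := Leaves U₁) (q := Leaves U₂)
      (by simp [Leaves, he₁, he₂, hf₁, hf₂])
      (filter_leaves_le_routedArcs hwit (by simp) (by simp) hr hU₁ (hcon₂ s₁ (by simp)))
      (filter_leaves_le_routedArcs hwit (by simp) (by simp) hr hU₂ (hcon₂ s₂ (by simp)))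
  rcases hinc with ⟨he, hf⟩ | ⟨he, hf⟩
  · exact not_pair_le_routedArcs map_snd_pathArcs_le hwit hv he hf hused
  · exact not_pair_le_routedArcs map_fst_pathArcs_le hwit hv he hf hused

/-- Let `D₁` be a Steiner rooted `k`-arc-connected `3`-regular
directed graph with root `r` and terminals `{s₁, s₂}`. Suppose a vertex
`v ∉ {s₁, s₂, r}` has two incident arcs `e` and `f`, both incoming or both outgoing,
such that `e` leaves a tight `s₁`-cut and `f` leaves a tight `s₂`-cut. If `D₂` is an
`({s₁, s₂} + r)`-fixed directed topological minor of `D₁` witnessed by `ψ` and `L`,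
and `D₂` is itself Steiner rooted `k`-arc-connected and `3`-regular, then `v` lies in
the image of `ψ`. -/
theorem essential_vertex_in_image {α : Type} [DecidableEq α]
    (D₁ D₂ : MDigraph α) (r s₁ s₂ v : α) (k : ℕ)
    (hs : s₁ ≠ s₂) (hr₁ : r ≠ s₁) (hr₂ : r ≠ s₂)
    (hrV : r ∈ D₁.verts) (hs₁V : s₁ ∈ D₁.verts) (hs₂V : s₂ ∈ D₁.verts)
    (hcon : D₁.SteinerRooted r {s₁, s₂} k)
    (hreg : D₁.ThreeRegular r {s₁, s₂} k)
    (hv : v ∈ D₁.verts) (hv₁ : v ≠ s₁) (hv₂ : v ≠ s₂) (hvr : v ≠ r)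
    (e f : α × α)
    (hef : ({e, f} : Multiset (α × α)) ≤ D₁.arcs)
    (hinc : (e.2 = v ∧ f.2 = v) ∨ (e.1 = v ∧ f.1 = v))
    (hcut₁ : ∃ U : Finset α, D₁.IsTightCut r s₁ k U ∧ e.1 ∈ U ∧ e.2 ∉ U)
    (hcut₂ : ∃ U : Finset α, D₁.IsTightCut r s₂ k U ∧ f.1 ∈ U ∧ f.2 ∉ U)
    (ψ : α → α) (L : List ((α × α) × List α))
    (hWsub : ({s₁, s₂, r} : Set α) ⊆ ↑D₂.verts)
    (hwit : MDigraph.FixedTopMinorWitness D₁ D₂ {s₁, s₂, r} ψ L)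
    (hcon₂ : D₂.SteinerRooted r {s₁, s₂} k)
    (hreg₂ : D₂.ThreeRegular r {s₁, s₂} k) :
    ∃ x ∈ D₂.verts, ψ x = v :=
  essential_vertex_in_image_general D₁ D₂ r s₁ s₂ v k e f hef hinc hcut₁ hcut₂ ψ L hWsub hwit hcon₂
end

section
/- Let D = (V, A) be a minimally Steiner rooted k-arc-connected 3-regular directed graph with root r and terminal set S ⊆ V − r, and let C ⊆ A be the arc set of a directed cycle. For each s ∈ S, let Q_s be an inclusionwise minimal subset of arcs that is the arc-disjoint union of k directed r–s paths. Then (a) C ⊆ ⋃_{s ∈ S} Q_s, and (b) C \ Q_s ≠ ∅ for all s ∈ S. -/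
namespace MDigraph

variable {α : Type} [DecidableEq α]

/-- The multiset `Q` of arcs of `D` is the arc-disjoint union of `k` directed
`r`-`s` paths. -/
def IsPathUnion (D : MDigraph α) (r s : α) (k : ℕ) (Q : Multiset (α × α)) : Prop :=
  Q ≤ D.arcs ∧ ∃ P : Fin k → List α, (∀ i, D.IsDipath (P i) r s) ∧
    (∑ i : Fin k, pathArcs (P i)) = Q

end MDigraph

/-!
(a) If an arc `e` of the cycle lies in no `Q s`, every `Q s` survives the deletion of `e`,
contradicting the minimality of `D`.

(b) Let `∂F = Σ_{(u,v) ∈ F} (δ_u - δ_v)` be the net out-degree of an arc multiset `F`.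
A union of `k` arc-disjoint `r`-`s` paths has `∂ = k (δ_r - δ_s)` and a cycle has `∂ = 0`.
Conversely, if `F ⊆ A` has `∂F = k (δ_r - δ_s)` with `k > 0`, then `F` contains an `r`-`s`
path: no arc of `F` leaves the set `R` of vertices reachable from `r` inside `F`, so
`Σ_{v ∈ R} ∂F v ≤ 0`, whereas this sum would be `k` if `s ∉ R`. Peeling off paths, `F`
contains `k` arc-disjoint ones. So if the cycle lay inside `Q s`, then `Q s` minus the cycle
would be a smaller union of `k` arc-disjoint `r`-`s` paths.
-/

namespace MDigraph

variable {α : Type}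

theorem isChain_iff_forall_mem_zip_tail {R : α → α → Prop} :
    ∀ {p : List α}, List.IsChain R p ↔ ∀ e ∈ p.zip p.tail, R e.1 e.2
  | [] => by simp
  | [x] => by simp
  | x :: y :: t => by
    rw [List.isChain_cons_cons, isChain_iff_forall_mem_zip_tail]
    simp

theorem nodup_pathArcs {p : List α} (hp : p.Nodup) : (pathArcs p).Nodup :=
  Multiset.coe_nodup.2 <| List.Nodup.of_map Prod.snd <| by
    rw [List.map_snd_zip (by simp)]
    exact hp.sublist (List.tail_sublist p)

theorem pathArcs_le_of_chain {F : Multiset (α × α)} {p : List α} (hp : p.Nodup)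
    (hpF : List.IsChain (fun x y => (x, y) ∈ F) p) : pathArcs p ≤ F :=
  (Multiset.le_iff_subset (nodup_pathArcs hp)).2 fun _ he =>
    isChain_iff_forall_mem_zip_tail.1 hpF _ he

theorem pathArcs_cons_cons (x y : α) (t : List α) :
    pathArcs (x :: y :: t) = (x, y) ::ₘ pathArcs (y :: t) := rfl

theorem nodup_cycleArcs {c : List α} (hc : c.Nodup) : (cycleArcs c).Nodup :=
  Multiset.coe_nodup.2 <| List.Nodup.of_map Prod.fst <| by rwa [List.map_fst_zip (by simp)]

theorem cycleArcs_cons (x : α) (t : List α) :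
    cycleArcs (x :: t) = pathArcs (x :: (t ++ [x])) := by
  simp only [cycleArcs, pathArcs, List.rotate_cons_succ, List.rotate_zero, List.tail_cons]
  congr 1
  simpa using
    (List.zip_append (l₁ := x :: t) (r₁ := [x]) (l₂ := t ++ [x]) (r₂ := []) (by simp)).symm

theorem exists_isDipath_concat {D : MDigraph α} {F : Multiset (α × α)} (hF : F ≤ D.arcs)
    {p : List α} {u v w : α} (hp : D.IsDipath p u v)
    (hpF : List.IsChain (fun x y => (x, y) ∈ F) p) (hvw : (v, w) ∈ F) :
    ∃ q, D.IsDipath q u w ∧ List.IsChain (fun x y => (x, y) ∈ F) q := by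
  obtain ⟨hnd, hu, hv, hverts, -⟩ := hp
  by_cases hw : w ∈ p
  · obtain ⟨q, t, rfl⟩ := List.append_of_mem hw
    have hpre : q ++ [w] <+: q ++ w :: t := ⟨t, by simp⟩
    have hqF := hpF.prefix hpre
    refine ⟨q ++ [w], ⟨hnd.sublist hpre.sublist, ?_, List.getLast?_concat,
      fun x hx => hverts x (hpre.sublist.mem hx), hqF.imp fun _ _ h => Multiset.mem_of_le hF h⟩,
      hqF⟩
    cases q <;> simpa using hu
  · have hqF : List.IsChain (fun x y => (x, y) ∈ F) (p ++ [w]) :=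
      List.isChain_append.2 ⟨hpF, List.isChain_singleton w, by simpa [hv] using hvw⟩
    refine ⟨p ++ [w], ⟨?_, ?_, List.getLast?_concat, ?_,
      hqF.imp fun _ _ h => Multiset.mem_of_le hF h⟩, hqF⟩
    · exact hnd.append (List.nodup_singleton w) (List.disjoint_singleton.2 hw)
    · simp [List.head?_append, hu]
    · simpa [or_imp, forall_and] using ⟨hverts, D.head_mem _ (Multiset.mem_of_le hF hvw)⟩

variable [DecidableEq α]

theorem IsDipath.delArc {D : MDigraph α} {p : List α} {u v : α} {e : α × α}
    (hp : D.IsDipath p u v) (he : e ∉ pathArcs p) : (D.delArc e).IsDipath p u v :=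
  ⟨hp.1, hp.2.1, hp.2.2.1, hp.2.2.2.1, isChain_iff_forall_mem_zip_tail.2 fun a ha =>
    (Multiset.mem_erase_of_ne (ne_of_mem_of_not_mem (Multiset.mem_coe.2 ha) he)).2
      (isChain_iff_forall_mem_zip_tail.1 hp.2.2.2.2 a ha)⟩

theorem IsPathUnion.hasArcDisjointPaths_delArc {D : MDigraph α} {r s : α}
    {k : ℕ} {Q : Multiset (α × α)} {e : α × α} (hQ : D.IsPathUnion r s k Q) (he : e ∉ Q) :
    (D.delArc e).HasArcDisjointPaths r s k := by
  obtain ⟨hQD, P, hP, rfl⟩ := hQ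
  refine ⟨P, fun i => (hP i).delArc fun h => he ?_, ?_⟩
  · exact Multiset.mem_of_le (Finset.single_le_sum (fun _ _ => zero_le) (Finset.mem_univ i)) h
  · change _ ≤ D.arcs.erase e
    simpa only [Multiset.erase_of_notMem he] using Multiset.erase_le_erase e hQD

/-- The net out-degree `v ↦ #(arcs of F leaving v) - #(arcs of F entering v)`. -/
def boundary : Multiset (α × α) →+ α → ℤ :=
  Multiset.sumAddMonoidHom.comp
    (Multiset.mapAddMonoidHom fun e => Pi.single e.1 1 - Pi.single e.2 1)

theorem boundary_cons (e : α × α) (F : Multiset (α × α)) :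
    boundary (e ::ₘ F) = Pi.single e.1 1 - Pi.single e.2 1 + boundary F := by
  simp [boundary]

theorem boundary_pathArcs :
    ∀ {p : List α} {u v : α}, p.head? = some u → p.getLast? = some v →
      boundary (pathArcs p) = Pi.single u 1 - Pi.single v 1
  | [], _, _, hu, _ => by simp at hu
  | [x], _, _, hu, hv => by
    simp only [List.head?_cons, List.getLast?_singleton, Option.some_inj] at hu hv
    subst hu hv
    simp [pathArcs]
  | x :: y :: t, u, v, hu, hv => by
    simp only [List.head?_cons, Option.some_inj] at hu
    subst hu
    rw [pathArcs_cons_cons, boundary_cons,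
      boundary_pathArcs (p := y :: t) rfl (by simpa using hv)]
    abel

theorem boundary_cycleArcs : ∀ c : List α, boundary (cycleArcs c) = 0
  | [] => map_zero boundary
  | x :: t => by
    rw [cycleArcs_cons, boundary_pathArcs rfl (by rw [← List.cons_append, List.getLast?_concat]),
      sub_self]

theorem IsPathUnion.boundary_eq {D : MDigraph α} {r s : α} {k : ℕ} {Q : Multiset (α × α)}
    (hQ : D.IsPathUnion r s k Q) : boundary Q = k • (Pi.single r 1 - Pi.single s 1) := by
  obtain ⟨-, P, hP, rfl⟩ := hQ
  simp [map_sum, fun i => boundary_pathArcs (hP i).2.1 (hP i).2.2.1, smul_sub]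

theorem sum_boundary_nonpos_of_closed {F : Multiset (α × α)} {R : Finset α}
    (hR : ∀ e ∈ F, e.1 ∈ R → e.2 ∈ R) : ∑ v ∈ R, boundary F v ≤ 0 := by
  induction F using Multiset.induction_on with
  | empty => simp
  | cons e F ih =>
    have he := hR e (Multiset.mem_cons_self e F)
    have hF := ih fun a ha => hR a (Multiset.mem_cons_of_mem ha)
    simp only [boundary_cons, Pi.add_apply, Pi.sub_apply, Finset.sum_add_distrib,
      Finset.sum_sub_distrib, Finset.sum_pi_single']
    have : (if e.1 ∈ R then (1 : ℤ) else 0) ≤ if e.2 ∈ R then 1 else 0 := by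
      split_ifs <;> simp_all
    linarith

theorem boundary_tsub {F G : Multiset (α × α)} (h : G ≤ F) :
    boundary (F - G) = boundary F - boundary G := by
  rw [eq_sub_iff_add_eq, ← map_add, tsub_add_cancel_of_le h]

theorem exists_isDipath_le {D : MDigraph α} {F : Multiset (α × α)} (hF : F ≤ D.arcs)
    {r s : α} {k : ℕ} (hrs : r ≠ s) (hk : 0 < k)
    (hbd : boundary F = k • (Pi.single r 1 - Pi.single s 1)) :
    ∃ p, D.IsDipath p r s ∧ pathArcs p ≤ F := by
  classical
  have hsum : ∀ R : Finset α, r ∈ R → s ∉ R → ∑ v ∈ R, boundary F v = k := by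
    intro R hr hs
    simp [hbd, ← Finset.mul_sum, Finset.sum_sub_distrib, Finset.sum_pi_single', hr, hs]
  have hr : r ∈ D.verts := by
    by_contra hr
    -- otherwise `{r}` would be closed under `F`
    have := sum_boundary_nonpos_of_closed (F := F) (R := {r}) fun e he h =>
      absurd (Finset.mem_singleton.1 h ▸ D.tail_mem e (Multiset.mem_of_le hF he)) hr
    rw [hsum _ (Finset.mem_singleton_self r) (by simpa using hrs.symm)] at this
    omega
  set R := D.verts.filter fun v =>
    ∃ p, D.IsDipath p r v ∧ List.IsChain (fun x y => (x, y) ∈ F) p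
  have hrR : r ∈ R := Finset.mem_filter.2 ⟨hr, [r],
    ⟨List.nodup_singleton r, rfl, rfl, by simpa, List.isChain_singleton r⟩,
    List.isChain_singleton r⟩
  by_contra hno
  have hsR : s ∉ R := fun h => by
    obtain ⟨p, hp, hpF⟩ := (Finset.mem_filter.1 h).2
    exact hno ⟨p, hp, pathArcs_le_of_chain hp.1 hpF⟩
  have hclosed : ∀ e ∈ F, e.1 ∈ R → e.2 ∈ R := by
    rintro ⟨u, w⟩ he hu
    obtain ⟨p, hp, hpF⟩ := (Finset.mem_filter.1 hu).2
    exact Finset.mem_filter.2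
      ⟨D.head_mem _ (Multiset.mem_of_le hF he), exists_isDipath_concat hF hp hpF he⟩
  have := sum_boundary_nonpos_of_closed hclosed
  rw [hsum R hrR hsR] at this
  omega

theorem exists_isDipath_family_le {D : MDigraph α} {r s : α} (hrs : r ≠ s) :
    ∀ {k : ℕ} {F : Multiset (α × α)}, F ≤ D.arcs →
      boundary F = k • (Pi.single r 1 - Pi.single s 1) →
      ∃ P : Fin k → List α, (∀ i, D.IsDipath (P i) r s) ∧ ∑ i, pathArcs (P i) ≤ F
  | 0, _, _, _ => ⟨Fin.elim0, fun i => i.elim0, by simp⟩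
  | k + 1, F, hF, hbd => by
    obtain ⟨p, hp, hpF⟩ := exists_isDipath_le hF hrs k.succ_pos hbd
    obtain ⟨P, hP, hPF⟩ := exists_isDipath_family_le hrs (k := k) (F := F - pathArcs p)
      (tsub_le_self.trans hF) (by
        rw [boundary_tsub hpF, hbd, boundary_pathArcs hp.2.1 hp.2.2.1, succ_nsmul,
          add_sub_cancel_right])
    refine ⟨Fin.cons p P, Fin.cases hp hP, ?_⟩
    rw [Fin.sum_univ_succ]
    simp only [Fin.cons_zero, Fin.cons_succ]
    calc pathArcs p + ∑ i, pathArcs (P i) ≤ pathArcs p + (F - pathArcs p) :=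
          add_le_add le_rfl hPF
      _ = F := add_tsub_cancel_of_le hpF

theorem IsPathUnion.exists_lt_of_cycleArcs_le {D : MDigraph α} {r s : α} {k : ℕ}
    {Q : Multiset (α × α)} {c : List α} (hQ : D.IsPathUnion r s k Q) (hrs : r ≠ s)
    (hc : D.IsDicycle c) (hcQ : cycleArcs c ≤ Q) : ∃ Q' < Q, D.IsPathUnion r s k Q' := by
  obtain ⟨P, hP, hPQ⟩ := exists_isDipath_family_le hrs (tsub_le_self.trans hQ.1)
    (by rw [boundary_tsub hcQ, hQ.boundary_eq, boundary_cycleArcs, sub_zero])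
  have hc0 : cycleArcs c ≠ 0 := by
    rw [← Multiset.card_pos]
    simp only [cycleArcs, Multiset.coe_card, List.length_zip, List.length_rotate, min_self]
    exact zero_lt_two.trans_le hc.2.1
  have hlt : Q - cycleArcs c < Q := tsub_le_self.lt_of_ne fun h =>
    hc0 (by simpa [h] using tsub_add_cancel_of_le hcQ)
  exact ⟨_, hPQ.trans_lt hlt, (hPQ.trans_lt hlt).le.trans hQ.1, P, hP, rfl⟩

end MDigraph

theorem cycle_arcs_in_path_unions_general {α : Type} [DecidableEq α]
    (D : MDigraph α) (r : α) (S : Finset α) (k : ℕ) (hrS : r ∉ S)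
    (hmin : D.MinSteinerRooted r S k)
    (c : List α) (hc : D.IsDicycle c)
    (Q : α → Multiset (α × α))
    (hQ : ∀ s ∈ S, MDigraph.IsPathUnion D r s k (Q s))
    (hQmin : ∀ s ∈ S, ∀ Q' < Q s, ¬ MDigraph.IsPathUnion D r s k Q') :
    (∀ e ∈ MDigraph.cycleArcs c, ∃ s ∈ S, e ∈ Q s) ∧
    (∀ s ∈ S, ∃ e ∈ MDigraph.cycleArcs c, e ∉ Q s) := by
  refine ⟨fun e he => ?_, fun s hs => ?_⟩
  · by_contra! hout
    exact hmin.2 e (Multiset.mem_of_le hc.2.2 he) fun s hs =>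
      (hQ s hs).hasArcDisjointPaths_delArc (hout s hs)
  · by_contra! hin
    have hcQ : MDigraph.cycleArcs c ≤ Q s :=
      (Multiset.le_iff_subset (MDigraph.nodup_cycleArcs hc.1)).2 hin
    obtain ⟨Q', hlt, hQ'⟩ :=
      (hQ s hs).exists_lt_of_cycleArcs_le (fun h => hrS (h ▸ hs)) hc hcQ
    exact hQmin s hs Q' hlt hQ'

/-- Let `D` be a minimally Steiner rooted `k`-arc-connected
`3`-regular directed graph with root `r` and terminal set `S`, and let `c` be a
directed cycle of `D`. For `s ∈ S`, let `Q s` be an inclusionwise minimal set of arcs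
that is the arc-disjoint union of `k` directed `r`-`s` paths. Then (a) every arc of `c`
lies in some `Q s`, and (b) for every `s ∈ S` some arc of `c` is outside `Q s`. -/
theorem cycle_arcs_in_path_unions {α : Type} [DecidableEq α]
    (D : MDigraph α) (r : α) (S : Finset α) (k : ℕ) (hrS : r ∉ S)
    (hmin : D.MinSteinerRooted r S k) (hreg : D.ThreeRegular r S k)
    (c : List α) (hc : D.IsDicycle c)
    (Q : α → Multiset (α × α))
    (hQ : ∀ s ∈ S, MDigraph.IsPathUnion D r s k (Q s))
    (hQmin : ∀ s ∈ S, ∀ Q' < Q s, ¬ MDigraph.IsPathUnion D r s k Q') :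
    (∀ e ∈ MDigraph.cycleArcs c, ∃ s ∈ S, e ∈ Q s) ∧
    (∀ s ∈ S, ∃ e ∈ MDigraph.cycleArcs c, e ∉ Q s) :=
  cycle_arcs_in_path_unions_general D r S k hrS hmin c hc Q hQ hQmin
end

section
/- For any positive integers q and k, there exists a constant f(q, k) such that the following holds. Let D = (V, A) be a Steiner rooted k-arc-connected directed graph with root r and a single terminal s, and let 𝒞 be a family of pairwise vertex-disjoint s-essential directed cycles in D with |𝒞| ≥ f(q, k). Then there exist cycles C_1, …, C_q ∈ 𝒞 such that (C_1, …, C_q) forms an s-ordered sequence of directed cycles. -/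
namespace MDigraph

variable {α : Type} [DecidableEq α]

/-- A vertex set `U` properly intersects a directed cycle (given by its vertex
sequence `c`) if both `V(c) ∩ U` and `V(c) \ U` are nonempty. -/
def ProperlyIntersects (U : Finset α) (c : List α) : Prop :=
  (∃ x ∈ c, x ∈ U) ∧ ∃ x ∈ c, x ∉ U

/-- A directed cycle `c` is `s`-essential if some tight `s`-cut properly intersects it. -/
def IsEssential (D : MDigraph α) (r s : α) (k : ℕ) (c : List α) : Prop :=
  ∃ U : Finset α, D.IsTightCut r s k U ∧ ProperlyIntersects U c

/-- The sequence `C 0, …, C (q-1)` of directed cycles is `s`-ordered: there are tight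
`s`-cuts `U i` such that `V(C i) ⊆ U j` for `i < j`, `V(C i) ∩ U j = ∅` for `i > j`,
and `U i` properly intersects `C i` for every `i`. -/
def IsOrderedSeq (D : MDigraph α) (r s : α) (k : ℕ) {q : ℕ} (C : Fin q → List α) : Prop :=
  ∃ U : Fin q → Finset α, (∀ i, D.IsTightCut r s k (U i)) ∧
    (∀ i j : Fin q, i < j → ∀ x ∈ C i, x ∈ U j) ∧
    (∀ i j : Fin q, j < i → ∀ x ∈ C i, x ∉ U j) ∧
    ∀ i, ProperlyIntersects (U i) (C i)

end MDigraph

section Ramsey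

variable {β κ : Type*} [LinearOrder β] [Fintype κ]

theorem exists_strictMono_endHomogeneous (col : β → β → κ) (L : ℕ) (S : Finset β)
    (hS : (Fintype.card κ + 1) ^ L ≤ S.card) :
    ∃ (v : Fin L → β) (f : Fin L → κ), StrictMono v ∧ (∀ i, v i ∈ S) ∧
      ∀ i j, i < j → col (v i) (v j) = f i := by
  classical
  induction L generalizing S with
  | zero => exact ⟨Fin.elim0, Fin.elim0, fun i => i.elim0, fun i => i.elim0, fun i => i.elim0⟩
  | succ L ih =>
    have hne : S.Nonempty := Finset.card_pos.mp (lt_of_lt_of_le (by positivity) hS)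
    set x := S.min' hne
    have : Nonempty κ := ⟨col x x⟩
    obtain ⟨a, -, ha⟩ := Finset.exists_le_card_fiber_of_mul_le_card_of_maps_to
      (f := col x) (s := S.erase x) (n := (Fintype.card κ + 1) ^ L)
      (fun _ _ => Finset.mem_univ _) Finset.univ_nonempty (by
        rw [Finset.card_erase_of_mem (S.min'_mem hne), Finset.card_univ]
        have := Nat.one_le_pow L (Fintype.card κ + 1) (Nat.succ_pos _)
        rw [pow_succ, mul_add_one, mul_comm] at hS
        omega)
    obtain ⟨v, f, hv, hvS, hcol⟩ := ih _ ha
    have hvS' : ∀ i, v i ∈ S.erase x ∧ col x (v i) = a := fun i =>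
      Finset.mem_filter.mp (hvS i)
    refine ⟨Fin.cons x v, Fin.cons a f, ?_, ?_, ?_⟩
    · exact Fin.strictMono_cons.mpr ⟨fun i => S.min'_lt_of_mem_erase_min' hne (hvS' i).1, hv⟩
    · exact Fin.cases (S.min'_mem hne) fun i => Finset.mem_of_mem_erase (hvS' i).1
    · simpa [Fin.forall_fin_succ] using ⟨fun i => (hvS' i).2, hcol⟩

theorem exists_strictMono_monochromatic [Fintype β] (col : β → β → κ) (t : ℕ)
    (hβ : (Fintype.card κ + 1) ^ (Fintype.card κ * t + 1) ≤ Fintype.card β) :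
    ∃ e : Fin t → β, StrictMono e ∧ ∃ a, ∀ i j, i < j → col (e i) (e j) = a := by
  classical
  obtain ⟨v, f, hv, -, hcol⟩ := exists_strictMono_endHomogeneous col _ Finset.univ hβ
  obtain ⟨a, ha⟩ := Fintype.exists_lt_card_fiber_of_mul_lt_card f (n := t) (by simp)
  obtain ⟨I, hI, hIcard⟩ := Finset.exists_subset_card_eq ha.le
  refine ⟨v ∘ I.orderEmbOfFin hIcard, hv.comp (I.orderEmbOfFin hIcard).strictMono, a,
    fun i j hij => ?_⟩
  have hi := (Finset.mem_filter.mp (hI (I.orderEmbOfFin_mem hIcard i))).2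
  rw [Function.comp_apply, Function.comp_apply,
    hcol _ _ ((I.orderEmbOfFin hIcard).strictMono hij), hi]

end Ramsey

namespace List

variable {α : Type*}

theorem isChain_of_forall_mem_zip_tail {R : α → α → Prop} :
    ∀ {l : List α}, (∀ x ∈ l.zip l.tail, R x.1 x.2) → l.IsChain R
  | [], _ | [_], _ => by simp
  | a :: b :: l, h => by
    rw [isChain_cons_cons]
    exact ⟨h (a, b) mem_cons_self,
      isChain_of_forall_mem_zip_tail fun x hx => h x (mem_cons_of_mem _ hx)⟩

theorem exists_mem_zip_tail_of_head?_of_getLast?_s11 {p : α → Prop} {l : List α} {u v : α}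
    (hu : l.head? = some u) (hv : l.getLast? = some v) (hpu : p u) (hpv : ¬p v) :
    ∃ x ∈ l.zip l.tail, p x.1 ∧ ¬p x.2 := by
  by_contra! h
  obtain ⟨l', rfl⟩ := head?_eq_some_iff.mp hu
  exact hpv <| (isChain_of_forall_mem_zip_tail h).induction p _ (fun _ _ h => h)
    (fun _ => by simpa using hpu) v (mem_of_getLast? hv)

theorem exists_mem_zip_rotate_one {p : α → Prop} {l : List α} {u v : α}
    (hu : u ∈ l) (hv : v ∈ l) (hpu : p u) (hpv : ¬p v) :
    ∃ x ∈ l.zip (l.rotate 1), p x.1 ∧ ¬p x.2 := by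
  by_contra! h
  obtain _ | ⟨a, l⟩ := l
  · simp at hu
  let R : α → α → Prop := fun x y => p x → p y
  have : IsTrans α R := ⟨fun _ _ _ hxy hyz hx => hyz (hxy hx)⟩
  -- the closed walk `a :: l ++ [a]` traverses exactly the arcs of the cycle
  have hchain : Cycle.Chain R (a :: l : List α) := by
    refine isChain_of_forall_mem_zip_tail fun x hx => h x ?_
    rw [rotate_cons_succ, rotate_zero]
    have := zip_append (l₁ := a :: l) (r₁ := [a]) (l₂ := l ++ [a]) (r₂ := []) (by simp)
    simp_all
  exact hpv (Cycle.chain_iff_pairwise.mp hchain u hu v hv hpu)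

end List

namespace MDigraph

variable {α : Type} [DecidableEq α] {D : MDigraph α} {r s : α} {k : ℕ}

section Cuts

variable {U W X : Finset α}

theorem card_le_outDegOf {M : Multiset (α × α)} (hM : M ≤ D.arcs)
    (hMU : ∀ e ∈ M, e.1 ∈ U ∧ e.2 ∉ U) : Multiset.card M ≤ D.outDegOf U := by
  rw [outDegOf, ← Multiset.filter_eq_self.mpr hMU]
  exact Multiset.card_le_card (Multiset.filter_le_filter _ hM)

theorem HasArcDisjointPaths.le_outDegOf_s11 (h : D.HasArcDisjointPaths r s k) (hr : r ∈ U)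
    (hs : s ∉ U) : k ≤ D.outDegOf U := by
  obtain ⟨P, hP, hPD⟩ := h
  have hleave : ∀ i, ∃ e ∈ pathArcs (P i), e.1 ∈ U ∧ e.2 ∉ U := fun i =>
    List.exists_mem_zip_tail_of_head?_of_getLast?_s11 (hP i).2.1 (hP i).2.2.1 hr hs
  choose e he heU using hleave
  calc k = Multiset.card (∑ i, {e i}) := by simp [Multiset.card_sum]
    _ ≤ D.outDegOf U := card_le_outDegOf
        ((Finset.sum_le_sum fun i _ => Multiset.singleton_le.mpr (he i)).trans hPD)
        (by simpa using heU)

theorem outDegOf_union_add_outDegOf_inter_le (D : MDigraph α) (U W : Finset α) :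
    D.outDegOf (U ∪ W) + D.outDegOf (U ∩ W) ≤ D.outDegOf U + D.outDegOf W := by
  rw [outDegOf, outDegOf, outDegOf, outDegOf, ← Multiset.card_add, ← Multiset.card_add,
    Multiset.filter_add_filter,
    Multiset.filter_add_filter (fun e : α × α => e.1 ∈ U ∧ e.2 ∉ U)]
  gcongr <;> refine Multiset.monotone_filter_right _ fun e => ?_ <;>
    simp only [Finset.mem_union, Finset.mem_inter] <;> tauto

theorem IsTightCut.union (h : D.HasArcDisjointPaths r s k) (hU : D.IsTightCut r s k U)
    (hW : D.IsTightCut r s k W) : D.IsTightCut r s k (U ∪ W) := by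
  obtain ⟨hrU, hsU, hkU⟩ := hU
  obtain ⟨hrW, hsW, hkW⟩ := hW
  have hr : r ∈ U ∪ W := Finset.mem_union_left _ hrU
  have hs : s ∉ U ∪ W := by simp [hsU, hsW]
  have := h.le_outDegOf_s11 hr hs
  have := h.le_outDegOf_s11 (Finset.mem_inter_of_mem hrU hrW) fun hs => hsU (Finset.mem_inter.mp hs).1
  have := D.outDegOf_union_add_outDegOf_inter_le U W
  exact ⟨hr, hs, by omega⟩

theorem IsTightCut.inter (h : D.HasArcDisjointPaths r s k) (hU : D.IsTightCut r s k U)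
    (hW : D.IsTightCut r s k W) : D.IsTightCut r s k (U ∩ W) := by
  obtain ⟨hrU, hsU, hkU⟩ := hU
  obtain ⟨hrW, hsW, hkW⟩ := hW
  have hr : r ∈ U ∩ W := Finset.mem_inter_of_mem hrU hrW
  have hs : s ∉ U ∩ W := fun hs => hsU (Finset.mem_inter.mp hs).1
  have := h.le_outDegOf_s11 hr hs
  have := h.le_outDegOf_s11 (Finset.mem_union_left W hrU) (by simp [hsU, hsW])
  have := D.outDegOf_union_add_outDegOf_inter_le U W
  exact ⟨hr, hs, by omega⟩

theorem card_le_outDegOf_of_properlyIntersects {ι : Type} [Fintype ι] {B : ι → List α}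
    (hB : ∀ i, D.IsDicycle (B i)) (hdisj : ∀ i j, i ≠ j → ∀ x ∈ B i, x ∉ B j)
    (hX : ∀ i, ProperlyIntersects X (B i)) : Fintype.card ι ≤ D.outDegOf X := by
  have hleave : ∀ i, ∃ e ∈ cycleArcs (B i), e.1 ∈ X ∧ e.2 ∉ X := fun i =>
    have ⟨⟨_, hu, huX⟩, ⟨_, hv, hvX⟩⟩ := hX i
    List.exists_mem_zip_rotate_one hu hv huX hvX
  choose e he heX using hleave
  -- the chosen arcs are distinct since their tails lie on disjoint cycles
  have he_inj : Function.Injective e := fun i j hij => by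
    by_contra hne
    have hi := (List.of_mem_zip (Multiset.mem_coe.mp (he i))).1
    have hj := (List.of_mem_zip (Multiset.mem_coe.mp (he j))).1
    exact hdisj i j hne _ hi (hij ▸ hj)
  have hsub : Finset.univ.val.map e ≤ D.arcs := by
    rw [Multiset.le_iff_subset (Finset.univ.nodup.map he_inj)]
    simpa [Multiset.subset_iff] using fun i => Multiset.mem_of_le (hB i).2.2 (he i)
  simpa using card_le_outDegOf hsub (by simpa using heX)

end Cuts

/-- Where the cycle `c` lies with respect to `U`: `some true` inside, `some false` outside,
`none` if `U` properly intersects it. -/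
def side (U : Finset α) (c : List α) : Option Bool :=
  if ∀ x ∈ c, x ∈ U then some true else if ∀ x ∈ c, x ∉ U then some false else none

section Side

variable {U : Finset α} {c : List α}

theorem mem_of_side_eq_some_true (h : side U c = some true) : ∀ x ∈ c, x ∈ U := by
  unfold side at h
  split_ifs at h <;> simp_all

theorem notMem_of_side_eq_some_false (h : side U c = some false) : ∀ x ∈ c, x ∉ U := by
  unfold side at h
  split_ifs at h <;> simp_all

theorem properlyIntersects_of_side_eq_none (h : side U c = none) : ProperlyIntersects U c := by
  unfold side at h
  split_ifs at h with h₁ h₂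
  push Not at h₁ h₂
  exact ⟨h₂, h₁⟩

end Side

section Sequence

variable {t : ℕ} {B : Fin t → List α} {U : Fin t → Finset α}

theorem isOrderedSeq_of_side (hU : ∀ i, D.IsTightCut r s k (U i))
    (hUB : ∀ i, ProperlyIntersects (U i) (B i))
    (hout : ∀ i j, i < j → side (U i) (B j) = some false)
    (hin : ∀ i j, i < j → side (U j) (B i) = some true) : D.IsOrderedSeq r s k B :=
  ⟨U, hU, fun i j hij => mem_of_side_eq_some_true (hin i j hij),
    fun i j hij => notMem_of_side_eq_some_false (hout j i hij), hUB⟩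

theorem IsTightCut.card_le_of_properlyIntersects {ι : Type} [Fintype ι] {B : ι → List α}
    {X : Finset α} (hX : D.IsTightCut r s k X) (hB : ∀ i, D.IsDicycle (B i))
    (hdisj : ∀ i j, i ≠ j → ∀ x ∈ B i, x ∉ B j)
    (hXB : ∀ i, ProperlyIntersects X (B i)) :
    Fintype.card ι ≤ k :=
  hX.2.2 ▸ card_le_outDegOf_of_properlyIntersects hB hdisj hXB

theorem not_forall_properlyIntersects_later (hB : ∀ i, D.IsDicycle (B i))
    (hdisj : ∀ i j, i ≠ j → ∀ x ∈ B i, x ∉ B j) (hU : ∀ i, D.IsTightCut r s k (U i))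
    (hUB : ∀ i, ProperlyIntersects (U i) (B i)) (hkt : k < t) :
    ¬∀ i j, i < j → ProperlyIntersects (U i) (B j) := by
  intro h
  obtain ⟨n, rfl⟩ : ∃ n, t = n + 1 := ⟨t - 1, by omega⟩
  have : ∀ j, ProperlyIntersects (U 0) (B j) := fun j => by
    rcases eq_or_ne j 0 with rfl | hj
    · exact hUB 0
    · exact h 0 j (Fin.pos_iff_ne_zero.mpr hj)
  have := (hU 0).card_le_of_properlyIntersects hB hdisj this
  simp only [Fintype.card_fin] at this
  omega

theorem not_forall_properlyIntersects_earlier (hB : ∀ i, D.IsDicycle (B i))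
    (hdisj : ∀ i j, i ≠ j → ∀ x ∈ B i, x ∉ B j) (hU : ∀ i, D.IsTightCut r s k (U i))
    (hUB : ∀ i, ProperlyIntersects (U i) (B i)) (hkt : k < t) :
    ¬∀ i j, i < j → ProperlyIntersects (U j) (B i) := by
  intro h
  obtain ⟨n, rfl⟩ : ∃ n, t = n + 1 := ⟨t - 1, by omega⟩
  have : ∀ i, ProperlyIntersects (U (Fin.last n)) (B i) := fun i => by
    rcases eq_or_ne i (Fin.last n) with rfl | hi
    · exact hUB _
    · exact h i _ (Fin.lt_last_iff_ne_last.mpr hi)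
  have := (hU _).card_le_of_properlyIntersects hB hdisj this
  simp only [Fintype.card_fin] at this
  omega

theorem not_forall_ne_mem (hD : D.HasArcDisjointPaths r s k) (hB : ∀ i, D.IsDicycle (B i))
    (hdisj : ∀ i j, i ≠ j → ∀ x ∈ B i, x ∉ B j) (hU : ∀ i, D.IsTightCut r s k (U i))
    (hUB : ∀ i, ProperlyIntersects (U i) (B i)) (hkt : k < t) :
    ¬∀ i j, i ≠ j → ∀ x ∈ B j, x ∈ U i := by
  intro h
  have ht : (Finset.univ : Finset (Fin t)).Nonempty :=
    Finset.univ_nonempty_iff.mpr ⟨⟨0, by omega⟩⟩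
  have hX : D.IsTightCut r s k (Finset.univ.inf' ht U) :=
    Finset.inf'_induction ht U (fun _ hU _ hW => hU.inter hD hW) fun i _ => hU i
  have hXB : ∀ i, ProperlyIntersects (Finset.univ.inf' ht U) (B i) := fun i => by
    obtain ⟨⟨x, hx, hxU⟩, ⟨y, hy, hyU⟩⟩ := hUB i
    refine ⟨⟨x, hx, (Finset.mem_inf' ht).mpr fun j _ => ?_⟩,
      ⟨y, hy, fun hyX => hyU (Finset.inf'_le U (Finset.mem_univ i) hyX)⟩⟩
    rcases eq_or_ne j i with rfl | hji
    · exact hxU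
    · exact h j i hji x hx
  have := hX.card_le_of_properlyIntersects hB hdisj hXB
  simp only [Fintype.card_fin] at this
  omega

theorem not_forall_ne_notMem (hD : D.HasArcDisjointPaths r s k) (hB : ∀ i, D.IsDicycle (B i))
    (hdisj : ∀ i j, i ≠ j → ∀ x ∈ B i, x ∉ B j) (hU : ∀ i, D.IsTightCut r s k (U i))
    (hUB : ∀ i, ProperlyIntersects (U i) (B i)) (hkt : k < t) :
    ¬∀ i j, i ≠ j → ∀ x ∈ B j, x ∉ U i := by
  intro h
  have ht : (Finset.univ : Finset (Fin t)).Nonempty :=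
    Finset.univ_nonempty_iff.mpr ⟨⟨0, by omega⟩⟩
  have hX : D.IsTightCut r s k (Finset.univ.sup' ht U) :=
    Finset.sup'_induction ht U (fun _ hU _ hW => hU.union hD hW) fun i _ => hU i
  have hXB : ∀ i, ProperlyIntersects (Finset.univ.sup' ht U) (B i) := fun i => by
    obtain ⟨⟨x, hx, hxU⟩, ⟨y, hy, hyU⟩⟩ := hUB i
    refine ⟨⟨x, hx, Finset.le_sup' U (Finset.mem_univ i) hxU⟩, ⟨y, hy, ?_⟩⟩
    rw [Finset.mem_sup']
    rintro ⟨j, -, hyj⟩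
    rcases eq_or_ne j i with rfl | hji
    · exact hyU hyj
    · exact h j i hji y hy hyj
  have := hX.card_le_of_properlyIntersects hB hdisj hXB
  simp only [Fintype.card_fin] at this
  omega

theorem side_eq_of_forall_lt (hD : D.HasArcDisjointPaths r s k) (hB : ∀ i, D.IsDicycle (B i))
    (hdisj : ∀ i j, i ≠ j → ∀ x ∈ B i, x ∉ B j) (hU : ∀ i, D.IsTightCut r s k (U i))
    (hUB : ∀ i, ProperlyIntersects (U i) (B i)) (hkt : k < t) {σ τ : Option Bool}
    (hσ : ∀ i j, i < j → side (U i) (B j) = σ)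
    (hτ : ∀ i j, i < j → side (U j) (B i) = τ) :
    (σ = some false ∧ τ = some true) ∨ (σ = some true ∧ τ = some false) := by
  have hσ_ne : σ ≠ none := by
    rintro rfl
    exact not_forall_properlyIntersects_later hB hdisj hU hUB hkt fun i j h =>
      properlyIntersects_of_side_eq_none (hσ i j h)
  have hτ_ne : τ ≠ none := by
    rintro rfl
    exact not_forall_properlyIntersects_earlier hB hdisj hU hUB hkt fun i j h =>
      properlyIntersects_of_side_eq_none (hτ i j h)
  obtain ⟨a, rfl⟩ := Option.ne_none_iff_exists'.mp hσ_ne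
  obtain ⟨b, rfl⟩ := Option.ne_none_iff_exists'.mp hτ_ne
  cases a <;> cases b
  · exact (not_forall_ne_notMem hD hB hdisj hU hUB hkt fun i j hij =>
      notMem_of_side_eq_some_false (hij.lt_or_gt.elim (hσ i j) (hτ j i))).elim
  · exact .inl ⟨rfl, rfl⟩
  · exact .inr ⟨rfl, rfl⟩
  · exact (not_forall_ne_mem hD hB hdisj hU hUB hkt fun i j hij =>
      mem_of_side_eq_some_true (hij.lt_or_gt.elim (hσ i j) (hτ j i))).elim

end Sequence

end MDigraph

theorem ordered_cycles_exist_general (q k : ℕ) :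
    ∃ N : ℕ, ∀ (α : Type) [DecidableEq α] (D : MDigraph α) (r s : α),
      r ≠ s → r ∈ D.verts → s ∈ D.verts →
      D.SteinerRooted r {s} k →
      ∀ (m : ℕ) (C : Fin m → List α),
        N ≤ m →
        (∀ i, D.IsDicycle (C i)) →
        (∀ i, D.IsEssential r s k (C i)) →
        (∀ i j, i ≠ j → ∀ x ∈ C i, x ∉ C j) →
        ∃ g : Fin q → Fin m, Function.Injective g ∧
          D.IsOrderedSeq r s k (fun i => C (g i)) := by
  set t := max q (k + 1)
  let c := Fintype.card (Option Bool × Option Bool)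
  refine ⟨(c + 1) ^ (c * t + 1), fun α _ D r s _ _ _ hD m C hm hC hess hdisj => ?_⟩
  choose W hW hWC using hess
  obtain ⟨e, he, ⟨σ, τ⟩, hcol⟩ := exists_strictMono_monochromatic
    (fun i j => (MDigraph.side (W i) (C j), MDigraph.side (W j) (C i))) t
    (by rwa [Fintype.card_fin])
  have hσ : ∀ i j, i < j → MDigraph.side (W (e i)) (C (e j)) = σ := fun i j h =>
    congrArg Prod.fst (hcol i j h)
  have hτ : ∀ i j, i < j → MDigraph.side (W (e j)) (C (e i)) = τ := fun i j h =>
    congrArg Prod.snd (hcol i j h)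
  have hqt : q ≤ t := le_max_left _ _
  have hφ := Fin.strictMono_castLE hqt
  rcases MDigraph.side_eq_of_forall_lt (hD s (Finset.mem_singleton_self s)) (fun i => hC (e i))
    (fun i j hij => hdisj _ _ (he.injective.ne hij)) (fun i => hW (e i)) (fun i => hWC (e i))
    (by omega) hσ hτ with ⟨rfl, rfl⟩ | ⟨rfl, rfl⟩
  · refine ⟨e ∘ Fin.castLE hqt, he.injective.comp (Fin.castLE_injective hqt),
      MDigraph.isOrderedSeq_of_side (fun _ => hW _) (fun _ => hWC _)
        (fun _ _ h => hσ _ _ (hφ h)) (fun _ _ h => hτ _ _ (hφ h))⟩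
  · refine ⟨e ∘ Fin.rev ∘ Fin.castLE hqt,
      he.injective.comp (Fin.rev_injective.comp (Fin.castLE_injective hqt)),
      MDigraph.isOrderedSeq_of_side (fun _ => hW _) (fun _ => hWC _)
        (fun _ _ h => hτ _ _ (Fin.rev_lt_rev.mpr (hφ h)))
        (fun _ _ h => hσ _ _ (Fin.rev_lt_rev.mpr (hφ h)))⟩

/-- For all positive integers `q` and `k` there is a constant `N`
such that: in every Steiner rooted `k`-arc-connected directed graph with root `r` and
single terminal `s`, every family of at least `N` pairwise vertex-disjoint
`s`-essential directed cycles contains `q` cycles forming an `s`-ordered sequence. -/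
theorem ordered_cycles_exist (q k : ℕ) (hq : 0 < q) (hk : 0 < k) :
    ∃ N : ℕ, ∀ (α : Type) [DecidableEq α] (D : MDigraph α) (r s : α),
      r ≠ s → r ∈ D.verts → s ∈ D.verts →
      D.SteinerRooted r {s} k →
      ∀ (m : ℕ) (C : Fin m → List α),
        N ≤ m →
        (∀ i, D.IsDicycle (C i)) →
        (∀ i, D.IsEssential r s k (C i)) →
        (∀ i j, i ≠ j → ∀ x ∈ C i, x ∉ C j) →
        ∃ g : Fin q → Fin m, Function.Injective g ∧
          D.IsOrderedSeq r s k (fun i => C (g i)) :=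
  ordered_cycles_exist_general q k
end

section
/- For any positive integers p and q, there exists a constant f(p, q) such that the following holds. Let A be a set of size f(p, q), and let ≺_1, …, ≺_p be p total orderings of A. Then there exists a subset {a_1, …, a_q} ⊆ A of q distinct elements such that, in each of the p orderings, these elements appear either in the order (a_1, …, a_q) or in the reverse order (a_q, …, a_1). -/
/-!
Fix an arbitrary reference linear order `<` on `A`. Erdős–Szekeres in its Ramsey form: among
`(a + b).choose a` elements there are `a` on which a strict total order `r` agrees with `<`, or `b`
on which it reverses `<`. Indeed, the remaining elements split by their `r`-comparison with the
`<`-minimum `m`, one side is large enough by Pascal's rule, and `m` extends a set found there.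
Applying this to the `p` orders one after another, each time inside the set found for the previous
ones, leaves `q` elements on which every order agrees with or reverses `<`; listed in `<`-order they
are the required sequence.
-/

open Finset

variable {ι : Type*} [LinearOrder ι]

def AgreesOn (r : ι → ι → Prop) (s : Finset ι) : Prop :=
  ∀ ⦃a⦄, a ∈ s → ∀ ⦃b⦄, b ∈ s → a < b → r a b

theorem AgreesOn.mono {r : ι → ι → Prop} {s t : Finset ι} (hs : AgreesOn r s) (hts : t ⊆ s) :
    AgreesOn r t :=
  fun _ ha _ hb hab => hs (hts ha) (hts hb) hab

theorem AgreesOn.insert_of_lt {r : ι → ι → Prop} {s : Finset ι} {m : ι} (hs : AgreesOn r s)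
    (hm : ∀ x ∈ s, m < x ∧ r m x) : AgreesOn r (insert m s) := by
  intro a ha b hb hab
  rcases mem_insert.1 ha with rfl | ha' <;> rcases mem_insert.1 hb with rfl | hb'
  · exact absurd hab (lt_irrefl _)
  · exact (hm b hb').2
  · exact absurd ((hm a ha').1.trans hab) (lt_irrefl _)
  · exact hs ha' hb' hab

theorem AgreesOn.orderEmbOfFin_lt {r : ι → ι → Prop} {s : Finset ι} {k : ℕ} (hs : AgreesOn r s)
    (h : #s = k) {j l : Fin k} (hjl : j < l) : r (s.orderEmbOfFin h j) (s.orderEmbOfFin h l) :=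
  hs (s.orderEmbOfFin_mem h j) (s.orderEmbOfFin_mem h l) ((s.orderEmbOfFin h).strictMono hjl)

theorem AgreesOn.exists_insert_min' {r : ι → ι → Prop} {s t : Finset ι} (hne : s.Nonempty)
    (hts : t ⊆ s.erase (s.min' hne)) (hr : ∀ x ∈ t, r (s.min' hne) x) (ht : AgreesOn r t) :
    ∃ u ⊆ s, #u = #t + 1 ∧ AgreesOn r u :=
  ⟨insert (s.min' hne) t,
    insert_subset (s.min'_mem hne) (hts.trans (erase_subset _ _)),
    card_insert_of_notMem fun hm => notMem_erase _ s (hts hm),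
    ht.insert_of_lt fun x hx => ⟨s.min'_lt_of_mem_erase_min' hne (hts hx), hr x hx⟩⟩

theorem exists_agreesOn_or_reverses (r : ι → ι → Prop) [Std.Trichotomous r] :
    ∀ (a b : ℕ) (s : Finset ι), (a + b).choose a ≤ #s →
      ∃ t ⊆ s, (a ≤ #t ∧ AgreesOn r t) ∨ (b ≤ #t ∧ AgreesOn (flip r) t) := by
  classical
  intro a
  induction a with
  | zero => exact fun _ s _ => ⟨∅, empty_subset s, .inl ⟨le_rfl, by simp [AgreesOn]⟩⟩
  | succ a iha =>
    intro b
    induction b with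
    | zero => exact fun s _ => ⟨∅, empty_subset s, .inr ⟨le_rfl, by simp [AgreesOn]⟩⟩
    | succ b ihb =>
      intro s hs
      have hne : s.Nonempty := card_pos.1 (lt_of_lt_of_le (Nat.choose_pos (by omega)) hs)
      set m := s.min' hne
      set above := (s.erase m).filter (r m)
      set below := (s.erase m).filter (flip r m)
      have hsplit : s.erase m ⊆ above ∪ below := by
        intro x hx
        rcases trichotomous_of r m x with h | h | h
        · exact mem_union_left _ (mem_filter.2 ⟨hx, h⟩)
        · exact absurd h.symm (ne_of_mem_erase hx)
        · exact mem_union_right _ (mem_filter.2 ⟨hx, h⟩)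
      have hcard : #s - 1 ≤ #above + #below := by
        rw [← card_erase_of_mem (s.min'_mem hne)]
        exact (card_le_card hsplit).trans (card_union_le _ _)
      have hpascal : (a + 1 + (b + 1)).choose (a + 1) =
          (a + (b + 1)).choose a + (a + 1 + b).choose (a + 1) := by
        rw [show a + 1 + (b + 1) = a + (b + 1) + 1 by omega, Nat.choose_succ_succ,
          show a + (b + 1) = a + 1 + b by omega]
      rcases le_or_gt ((a + (b + 1)).choose a) #above with habove | hbelow
      · obtain ⟨t, hts, ⟨hta, ht⟩ | hflip⟩ := iha (b + 1) above habove
        · obtain ⟨u, hus, hu, hu'⟩ := ht.exists_insert_min' hne (hts.trans (filter_subset _ _))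
            fun x hx => (mem_filter.1 (hts hx)).2
          exact ⟨u, hus, .inl ⟨by omega, hu'⟩⟩
        · exact ⟨t, hts.trans ((filter_subset _ _).trans (erase_subset _ _)), .inr hflip⟩
      · obtain ⟨t, hts, ht | ⟨htb, hflip⟩⟩ := ihb below (by omega)
        · exact ⟨t, hts.trans ((filter_subset _ _).trans (erase_subset _ _)), .inl ht⟩
        · obtain ⟨u, hus, hu, hu'⟩ := hflip.exists_insert_min' hne (hts.trans (filter_subset _ _))
            fun x hx => (mem_filter.1 (hts hx)).2
          exact ⟨u, hus, .inr ⟨by omega, hu'⟩⟩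

def commonMonotoneBound (q : ℕ) : ℕ → ℕ
  | 0 => q
  | p + 1 => let n := commonMonotoneBound q p; (n + n).choose n

theorem exists_agreesOn_or_reverses_forall {p : ℕ} (r : Fin p → ι → ι → Prop)
    (hr : ∀ i, Std.Trichotomous (r i)) (q : ℕ) (s : Finset ι) (hs : commonMonotoneBound q p ≤ #s) :
    ∃ t ⊆ s, q ≤ #t ∧ ∀ i, AgreesOn (r i) t ∨ AgreesOn (flip (r i)) t := by
  induction p generalizing s with
  | zero => exact ⟨s, subset_rfl, hs, finZeroElim⟩
  | succ p ih =>
    have := hr (Fin.last p)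
    obtain ⟨t, hts, hlast⟩ := exists_agreesOn_or_reverses (r (Fin.last p)) _ _ s hs
    obtain ⟨u, hut, hqu, hinit⟩ := ih (fun i => r i.castSucc) (fun i => hr i.castSucc) t
      (by rcases hlast with h | h <;> exact h.1)
    refine ⟨u, hut.trans hts, hqu, Fin.lastCases ?_ hinit⟩
    exact hlast.imp (fun h => h.2.mono hut) (fun h => h.2.mono hut)

theorem common_monotone_subsequence_general (p q : ℕ) :
    ∃ N : ℕ, ∀ (A : Type), Finite A → Nat.card A = N →
      ∀ r : Fin p → A → A → Prop, (∀ i, IsStrictTotalOrder A (r i)) →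
      ∃ a : Fin q → A, Function.Injective a ∧
        ∀ i : Fin p,
          (∀ j l : Fin q, j < l → r i (a j) (a l)) ∨
          (∀ j l : Fin q, j < l → r i (a l) (a j)) := by
  refine ⟨commonMonotoneBound q p, fun A _ hA r hr => ?_⟩
  have := Fintype.ofFinite A
  let _ : LinearOrder A := LinearOrder.lift' _ (Finite.equivFin A).injective
  obtain ⟨t, -, hqt, hmono⟩ := exists_agreesOn_or_reverses_forall r (fun i => (hr i).toTrichotomous)
    q univ (by rw [card_univ, ← Nat.card_eq_fintype_card, hA])
  obtain ⟨u, hut, hu⟩ := exists_subset_card_eq hqt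
  refine ⟨u.orderEmbOfFin hu, (u.orderEmbOfFin hu).injective, fun i => ?_⟩
  exact (hmono i).imp (fun h _ _ hjl => (h.mono hut).orderEmbOfFin_lt hu hjl)
    (fun h _ _ hjl => (h.mono hut).orderEmbOfFin_lt hu hjl)

/-- For all positive integers `p` and `q` there is a constant `N`
such that: for every set `A` of size `N` and every `p` total (strict linear) orderings
of `A`, there exist `q` distinct elements `a 0, …, a (q-1)` of `A` that appear in each
of the `p` orderings either in this order or in the reverse order. -/
theorem common_monotone_subsequence (p q : ℕ) (hp : 0 < p) (hq : 0 < q) :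
    ∃ N : ℕ, ∀ (A : Type), Finite A → Nat.card A = N →
      ∀ r : Fin p → A → A → Prop, (∀ i, IsStrictTotalOrder A (r i)) →
      ∃ a : Fin q → A, Function.Injective a ∧
        ∀ i : Fin p,
          (∀ j l : Fin q, j < l → r i (a j) (a l)) ∨
          (∀ j l : Fin q, j < l → r i (a l) (a j)) :=
  common_monotone_subsequence_general p q
end

section
/- For every positive integer t, every minimal 3-regular instance (G = (V, E), S, r) of Steiner Rooted 1-Orientation with t Terminals satisfies |V| = 2t; in particular, the maximum number of vertices N_{1,t} of such a minimal 3-regular instance equals 2t. -/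
/-- A finite loopless undirected multigraph on vertex set `verts`; the edges are
recorded as a multiset of unordered pairs, so that parallel edges are allowed. -/
structure MGraph (α : Type) where
  verts : Finset α
  edges : Multiset (Sym2 α)
  mem_verts : ∀ e ∈ edges, ∀ x ∈ e, x ∈ verts
  loopless : ∀ e ∈ edges, ¬ e.IsDiag

namespace MGraph

variable {α : Type} [DecidableEq α]

/-- The degree of a vertex. -/
def deg (G : MGraph α) (v : α) : ℕ := (G.edges.filter (fun e => v ∈ e)).card

/-- `p` is the vertex sequence of a path in `G` from `u` to `v`. -/
def IsPath (G : MGraph α) (p : List α) (u v : α) : Prop :=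
  p.Nodup ∧ p.head? = some u ∧ p.getLast? = some v ∧
    (∀ x ∈ p, x ∈ G.verts) ∧ List.Chain' (fun x y => s(x, y) ∈ G.edges) p

/-- The multiset of edges traversed by a path given by its vertex sequence. -/
def pathEdges (p : List α) : Multiset (Sym2 α) :=
  ↑((p.zip p.tail).map fun xy => s(xy.1, xy.2))

/-- Delete (one copy of) the edge `e` from `G`. -/
def delEdge (G : MGraph α) (e : Sym2 α) : MGraph α where
  verts := G.verts
  edges := G.edges.erase e
  mem_verts := fun a ha => G.mem_verts a (Multiset.mem_of_mem_erase ha)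
  loopless := fun a ha => G.loopless a (Multiset.mem_of_mem_erase ha)

end MGraph

namespace MGraph

variable {α : Type} [DecidableEq α]

/-- `D` is an orientation of the multigraph `G`. -/
def IsOrientation (G : MGraph α) (D : MDigraph α) : Prop :=
  D.verts = G.verts ∧ D.arcs.map (fun e => s(e.1, e.2)) = G.edges

/-- The instance `(G, S, r)` admits a feasible orientation, i.e. an orientation
that is Steiner rooted `k`-arc-connected. -/
def Feasible (G : MGraph α) (r : α) (S : Finset α) (k : ℕ) : Prop :=
  ∃ D : MDigraph α, G.IsOrientation D ∧ D.SteinerRooted r S k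

/-- `(G, S, r)` is a `3`-regular instance: the root `r` and every terminal have
degree exactly `k`, and every other vertex has degree exactly `3`. -/
def ThreeRegularInstance (G : MGraph α) (r : α) (S : Finset α) (k : ℕ) : Prop :=
  G.deg r = k ∧ (∀ s ∈ S, G.deg s = k) ∧
    ∀ v ∈ G.verts, v ≠ r → v ∉ S → G.deg v = 3

/-- `(G, S, r)` is a minimal instance: it admits a feasible orientation, but the
deletion of any edge destroys all feasible orientations. -/
def MinimalInstance (G : MGraph α) (r : α) (S : Finset α) (k : ℕ) : Prop :=
  G.Feasible r S k ∧ ∀ e ∈ G.edges, ¬ (G.delEdge e).Feasible r S k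

end MGraph

/-!
For `k = 1` an instance is feasible exactly when every terminal is reachable from the root:
orienting each edge away from the endpoint closer to the root turns shortest paths into directed
paths. Minimality therefore makes `G` a tree. Every vertex is reachable, since an unreachable
vertex of degree `3` would carry a deletable edge, and every edge lies on a breadth-first search
tree from the root, since any other edge could be deleted. Hence `|E| = |V| - 1`, and the
handshake lemma `2 (|V| - 1) = 1 + t + 3 (|V| - t - 1)` gives `|V| = 2t`. The bound is attained
by a caterpillar whose spine is a path of `t` vertices starting at the root, with the `t`
terminals as leaves.
-/

theorem SimpleGraph.Reachable.exists_adj_dist_lt {V : Type*} {G : SimpleGraph V} {r v : V}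
    (h : G.Reachable r v) (hv : v ≠ r) : ∃ u, G.Adj u v ∧ G.dist r u < G.dist r v := by
  obtain ⟨p, hp⟩ := h.symm.exists_walk_length_eq_dist
  cases p with
  | nil => exact absurd rfl hv
  | cons hadj q =>
    refine ⟨_, hadj.symm, ?_⟩
    rw [G.dist_comm, G.dist_comm (u := r)]
    have := G.dist_le q
    simp only [SimpleGraph.Walk.length_cons] at hp
    omega

namespace List

variable {α : Type*}

theorem IsChain.rel_of_mem_zip_tail {R : α → α → Prop} :
    ∀ {l : List α}, l.IsChain R → ∀ {x y : α}, (x, y) ∈ l.zip l.tail → R x y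
  | [], _, _, _, h => by simp at h
  | [_], _, _, _, h => by simp at h
  | a :: b :: l, hc, x, y, h => by
    rw [tail_cons, zip_cons_cons, mem_cons] at h
    rcases h with h | h
    · cases h
      exact (isChain_cons_cons.mp hc).1
    · exact IsChain.rel_of_mem_zip_tail hc.tail h

theorem Nodup.zip_of_left {β : Type*} :
    ∀ {l : List α} {l' : List β}, l.Nodup → (l.zip l').Nodup
  | [], _, _ => by simp
  | _ :: _, [], _ => by simp
  | _ :: _, _ :: _, h => by
    rw [zip_cons_cons, nodup_cons]
    exact ⟨fun hm => (nodup_cons.mp h).1 (of_mem_zip hm).1, (nodup_cons.mp h).2.zip_of_left⟩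

theorem exists_nodup_isChain_of_descent {R : α → α → Prop} {V : Set α} {r : α} (d : α → ℕ)
    (hr : r ∈ V) (h : ∀ v ∈ V, v ≠ r → ∃ u ∈ V, R u v ∧ d u < d v) {v : α} (hv : v ∈ V) :
    ∃ p : List α, p.Nodup ∧ p.head? = some r ∧ p.getLast? = some v ∧ (∀ x ∈ p, x ∈ V) ∧
      p.IsChain R := by
  -- Bounding the potential along the path by that of its endpoint keeps appended endpoints new.
  suffices key : ∀ n, ∀ v ∈ V, d v = n → ∃ p : List α, p.Nodup ∧ p.head? = some r ∧
      p.getLast? = some v ∧ (∀ x ∈ p, x ∈ V ∧ d x ≤ d v) ∧ p.IsChain R by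
    obtain ⟨p, hnd, hh, hl, hmem, hc⟩ := key _ v hv rfl
    exact ⟨p, hnd, hh, hl, fun x hx => (hmem x hx).1, hc⟩
  intro n
  induction n using Nat.strong_induction_on with
  | _ n ih =>
    intro v hv hdv
    by_cases hvr : v = r
    · subst hvr
      exact ⟨[v], nodup_singleton v, rfl, rfl, by simp [hv], isChain_singleton v⟩
    obtain ⟨u, hu, huv, hlt⟩ := h v hv hvr
    obtain ⟨p, hnd, hh, hl, hmem, hc⟩ := ih _ (hdv ▸ hlt) u hu rfl
    refine ⟨p ++ [v], ?_, by simp [head?_append, hh], by simp, ?_, ?_⟩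
    · refine nodup_append.mpr ⟨hnd, nodup_singleton v, ?_⟩
      intro x hx y hy hxy
      rw [mem_singleton] at hy
      have := (hmem x hx).2
      subst hy hxy
      omega
    · intro x hx
      rcases mem_append.mp hx with hx | hx
      · exact ⟨(hmem x hx).1, by have := (hmem x hx).2; omega⟩
      · rw [mem_singleton.mp hx]; exact ⟨hv, le_rfl⟩
    · refine isChain_append.mpr ⟨hc, isChain_singleton v, ?_⟩
      simp only [hl, Option.mem_def, Option.some.injEq, head?_cons]
      rintro x rfl y rfl
      exact huv

end List

theorem Multiset.card_filter_eq_sum_map_ite {α : Type*} (p : α → Prop) [DecidablePred p]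
    (m : Multiset α) : (m.filter p).card = (m.map fun a => if p a then 1 else 0).sum := by
  induction m using Multiset.induction_on with
  | empty => simp
  | cons a m ih => by_cases h : p a <;> simp [h, ih, add_comm]

namespace MDigraph

variable {α : Type}

theorem IsDipath.hasArcDisjointPaths_one {D : MDigraph α} {p : List α} {u v : α}
    (hp : D.IsDipath p u v) : D.HasArcDisjointPaths u v 1 := by
  refine ⟨fun _ => p, fun _ => hp, ?_⟩
  rw [Fin.sum_univ_one, pathArcs, Multiset.le_iff_subset (Multiset.coe_nodup.mpr hp.1.zip_of_left)]
  intro a ha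
  exact List.IsChain.rel_of_mem_zip_tail hp.2.2.2.2 (Multiset.mem_coe.mp ha)

end MDigraph

namespace MGraph

variable {α : Type}

/-- Parallel edges do not matter for reachability and distances, which are therefore taken in
the underlying simple graph. -/
def adjGraph (G : MGraph α) : SimpleGraph α := SimpleGraph.fromRel fun x y => s(x, y) ∈ G.edges

@[simp]
theorem adjGraph_adj {G : MGraph α} {x y : α} : G.adjGraph.Adj x y ↔ s(x, y) ∈ G.edges := by
  rw [adjGraph, SimpleGraph.fromRel_adj, Sym2.eq_swap, or_self, and_iff_right_iff_imp]
  rintro he rfl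
  exact G.loopless _ he (Sym2.mk_isDiag_iff.mpr rfl)

theorem induction_of_reachable {G : MGraph α} {Q : α → Prop}
    (hQ : ∀ x y, s(x, y) ∈ G.edges → Q x → Q y) {u v : α} (hu : Q u)
    (h : G.adjGraph.Reachable u v) : Q v := by
  rw [SimpleGraph.reachable_iff_reflTransGen] at h
  induction h with
  | refl => exact hu
  | tail _ hxy ih => exact hQ _ _ (adjGraph_adj.mp hxy) ih

theorem mem_verts_of_reachable {G : MGraph α} {u v : α} (h : G.adjGraph.Reachable u v)
    (hu : u ∈ G.verts) : v ∈ G.verts :=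
  induction_of_reachable (fun _ _ he _ => G.mem_verts _ he _ (Sym2.mem_mk_right _ _)) hu h

theorem reachable_of_isChain {G : MGraph α} {p : List α} {u v : α}
    (hc : p.IsChain fun x y => s(x, y) ∈ G.edges) (hh : p.head? = some u)
    (hl : p.getLast? = some v) : G.adjGraph.Reachable u v := by
  obtain ⟨l, rfl⟩ : ∃ l, p = u :: l := by
    cases p with
    | nil => simp at hh
    | cons a l => exact ⟨l, by simpa using hh⟩
  rw [SimpleGraph.reachable_iff_reflTransGen]
  refine List.relationReflTransGen_of_exists_isChain_cons l
    (hc.imp fun _ _ => adjGraph_adj.mpr) ?_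
  simpa [List.getLast?_eq_some_getLast (List.cons_ne_nil u l)] using hl

theorem reachable_of_descent {G : MGraph α} {r : α} (d : α → ℕ) (hr : r ∈ G.verts)
    (h : ∀ v ∈ G.verts, v ≠ r → ∃ u, s(u, v) ∈ G.edges ∧ d u < d v) {v : α}
    (hv : v ∈ G.verts) : G.adjGraph.Reachable r v := by
  have hpred : ∀ v ∈ (G.verts : Set α), v ≠ r →
      ∃ u ∈ (G.verts : Set α), s(u, v) ∈ G.edges ∧ d u < d v := by
    intro v hv hvr
    obtain ⟨u, he, hlt⟩ := h v hv hvr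
    exact ⟨u, G.mem_verts _ he _ (Sym2.mem_mk_left _ _), he, hlt⟩
  obtain ⟨p, -, hh, hl, -, hc⟩ := List.exists_nodup_isChain_of_descent d hr hpred hv
  exact reachable_of_isChain hc hh hl

noncomputable def orientBy (d : α → ℕ) (e : Sym2 α) : α × α :=
  if d e.out.1 ≤ d e.out.2 then e.out else e.out.swap

theorem mk_orientBy (d : α → ℕ) (e : Sym2 α) :
    s((orientBy d e).1, (orientBy d e).2) = e := by
  unfold orientBy
  split_ifs
  · exact e.out_eq
  · rw [Prod.fst_swap, Prod.snd_swap, Sym2.eq_swap]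
    exact e.out_eq

theorem fst_orientBy_mem (d : α → ℕ) (e : Sym2 α) : (orientBy d e).1 ∈ e := by
  simpa only [mk_orientBy] using Sym2.mem_mk_left (orientBy d e).1 (orientBy d e).2

theorem snd_orientBy_mem (d : α → ℕ) (e : Sym2 α) : (orientBy d e).2 ∈ e := by
  simpa only [mk_orientBy] using Sym2.mem_mk_right (orientBy d e).1 (orientBy d e).2

theorem orientBy_of_lt {d : α → ℕ} {a b : α} (h : d a < d b) : orientBy d s(a, b) = (a, b) := by
  unfold orientBy
  generalize hq : Quot.out s(a, b) = q
  obtain ⟨x, y⟩ := q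
  have hxy : s(x, y) = s(a, b) := by
    have := Quot.out_eq s(a, b)
    rwa [hq] at this
  rcases Sym2.eq_iff.mp hxy with ⟨rfl, rfl⟩ | ⟨rfl, rfl⟩
  · rw [if_pos h.le]
  · rw [if_neg (not_le.mpr h), Prod.swap_prod_mk]

noncomputable def orientation (G : MGraph α) (d : α → ℕ) : MDigraph α where
  verts := G.verts
  arcs := G.edges.map (orientBy d)
  tail_mem := by
    intro a ha
    obtain ⟨e, he, rfl⟩ := Multiset.mem_map.mp ha
    exact G.mem_verts e he _ (fst_orientBy_mem d e)
  head_mem := by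
    intro a ha
    obtain ⟨e, he, rfl⟩ := Multiset.mem_map.mp ha
    exact G.mem_verts e he _ (snd_orientBy_mem d e)
  loopless := by
    intro a ha hdiag
    obtain ⟨e, he, rfl⟩ := Multiset.mem_map.mp ha
    exact G.loopless e he (mk_orientBy d e ▸ Sym2.mk_isDiag_iff.mpr hdiag)

theorem isOrientation_orientation (G : MGraph α) (d : α → ℕ) :
    G.IsOrientation (G.orientation d) := by
  refine ⟨rfl, ?_⟩
  change (G.edges.map (orientBy d)).map _ = G.edges
  rw [Multiset.map_map]
  conv_rhs => rw [← Multiset.map_id G.edges]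
  exact Multiset.map_congr rfl fun e _ => mk_orientBy d e

theorem feasible_one_of_reachable {G : MGraph α} {r : α} {S : Finset α} (hr : r ∈ G.verts)
    (h : ∀ s ∈ S, G.adjGraph.Reachable r s) : G.Feasible r S 1 := by
  set d := G.adjGraph.dist r
  set V : Set α := {v | v ∈ G.verts ∧ G.adjGraph.Reachable r v}
  have hpred : ∀ v ∈ V, v ≠ r → ∃ u ∈ V, (u, v) ∈ (G.orientation d).arcs ∧ d u < d v := by
    rintro v ⟨-, hrv⟩ hvr
    obtain ⟨u, hadj, hlt⟩ := hrv.exists_adj_dist_lt hvr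
    have he := adjGraph_adj.mp hadj
    refine ⟨u, ⟨G.mem_verts _ he _ (Sym2.mem_mk_left _ _), hrv.trans hadj.symm.reachable⟩,
      ?_, hlt⟩
    exact orientBy_of_lt hlt ▸ Multiset.mem_map_of_mem _ he
  refine ⟨G.orientation d, isOrientation_orientation G d, fun s hs => ?_⟩
  obtain ⟨p, hnd, hh, hl, hV, hc⟩ := List.exists_nodup_isChain_of_descent (V := V) d
    ⟨hr, .rfl⟩ hpred ⟨mem_verts_of_reachable (h s hs) hr, h s hs⟩
  exact MDigraph.IsDipath.hasArcDisjointPaths_one ⟨hnd, hh, hl, fun x hx => (hV x hx).1, hc⟩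

theorem Feasible.reachable {G : MGraph α} {r : α} {S : Finset α} (h : G.Feasible r S 1)
    {s : α} (hs : s ∈ S) : G.adjGraph.Reachable r s := by
  obtain ⟨D, ⟨-, harcs⟩, hD⟩ := h
  obtain ⟨P, hP, -⟩ := hD s hs
  obtain ⟨-, hh, hl, -, hc⟩ := hP 0
  refine reachable_of_isChain (List.IsChain.imp (fun x y hxy => ?_) hc) hh hl
  exact harcs ▸ Multiset.mem_map_of_mem (fun e : α × α => s(e.1, e.2)) hxy

theorem feasible_one_iff {G : MGraph α} {r : α} {S : Finset α} (hr : r ∈ G.verts) :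
    G.Feasible r S 1 ↔ ∀ s ∈ S, G.adjGraph.Reachable r s :=
  ⟨fun h _ hs => h.reachable hs, feasible_one_of_reachable hr⟩

section DecidableEq

variable [DecidableEq α]

theorem adjGraph_delEdge_le (G : MGraph α) (e : Sym2 α) :
    (G.delEdge e).adjGraph ≤ G.adjGraph :=
  fun _ _ h => adjGraph_adj.mpr (Multiset.mem_of_mem_erase (adjGraph_adj.mp h))

theorem sum_deg_eq_two_mul_card_edges (G : MGraph α) :
    ∑ v ∈ G.verts, G.deg v = 2 * Multiset.card G.edges := by
  have hedge : ∀ e ∈ G.edges, ∑ v ∈ G.verts, (if v ∈ e then 1 else 0) = 2 := by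
    intro e he
    rw [Finset.sum_boole, Nat.cast_id, ← Sym2.card_toFinset_of_not_isDiag e (G.loopless e he)]
    congr 1
    ext v
    simpa [Sym2.mem_toFinset] using G.mem_verts e he v
  simp only [deg, Multiset.card_filter_eq_sum_map_ite]
  rw [← Multiset.sum_map_sum, Multiset.map_congr rfl hedge, Multiset.map_const',
    Multiset.sum_replicate, smul_eq_mul, mul_comm]

def parentEdges (P : α → α) (V : Finset α) (r : α) : Multiset (Sym2 α) :=
  (V.erase r).val.map fun v => s(P v, v)

theorem nodup_parentEdges {P : α → α} {V : Finset α} {r : α} {d : α → ℕ}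
    (hd : ∀ v ∈ V, v ≠ r → d (P v) < d v) : (parentEdges P V r).Nodup := by
  refine (V.erase r).nodup.map_on fun v hv w hw hvw => ?_
  obtain ⟨hvr, hv⟩ := Finset.mem_erase.mp hv
  obtain ⟨hwr, hw⟩ := Finset.mem_erase.mp hw
  rcases Sym2.eq_iff.mp hvw with ⟨-, h⟩ | ⟨hPv, hPw⟩
  · exact h
  · have hv' := hd v hv hvr
    have hw' := hd w hw hwr
    rw [hPv] at hv'
    rw [← hPw] at hw'
    omega

/-- An unreachable vertex that is neither root nor terminal has degree `3`, so it carries an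
edge whose deletion leaves every terminal reachable. -/
theorem reachable_of_minimal {G : MGraph α} {r : α} {S : Finset α} (hr : r ∈ G.verts)
    (h3 : G.ThreeRegularInstance r S 1) (hmin : G.MinimalInstance r S 1) {v : α}
    (hv : v ∈ G.verts) : G.adjGraph.Reachable r v := by
  have hterm := (feasible_one_iff hr).mp hmin.1
  by_contra hnr
  have hvr : v ≠ r := by rintro rfl; exact hnr .rfl
  have hvS : v ∉ S := fun hvS => hnr (hterm v hvS)
  obtain ⟨e, hev⟩ : ∃ e, e ∈ G.edges.filter (v ∈ ·) := by
    refine Multiset.card_pos_iff_exists_mem.mp ?_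
    have := h3.2.2 v hv hvr hvS
    rw [deg] at this
    omega
  obtain ⟨he, hve⟩ := Multiset.mem_filter.mp hev
  refine hmin.2 e he ((feasible_one_iff (G := G.delEdge e) hr).mpr fun s hs => ?_)
  refine induction_of_reachable (fun x y hxy hx => ?_) .rfl (hterm s hs)
  have hxG : G.adjGraph.Reachable r x := hx.mono (adjGraph_delEdge_le G e)
  have hne : s(x, y) ≠ e := by
    rintro rfl
    rcases Sym2.mem_iff.mp hve with rfl | rfl
    · exact hnr hxG
    · exact hnr (hxG.trans (adjGraph_adj.mpr hxy).reachable)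
  exact hx.trans (adjGraph_adj.mpr ((Multiset.mem_erase_of_ne hne).mpr hxy)).reachable

/-- A minimal instance is a breadth-first search tree: every edge not used by the search could
be deleted without disconnecting a terminal from the root. -/
theorem exists_parentEdges_eq_edges_of_minimal {G : MGraph α} {r : α} {S : Finset α}
    (hr : r ∈ G.verts) (hS : ↑S ⊆ (G.verts : Set α)) (h3 : G.ThreeRegularInstance r S 1)
    (hmin : G.MinimalInstance r S 1) : ∃ P : α → α, parentEdges P G.verts r = G.edges := by
  choose! P hP using fun v (hv : v ∈ G.verts) (hvr : v ≠ r) =>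
    (reachable_of_minimal hr h3 hmin hv).exists_adj_dist_lt hvr
  refine ⟨P, ?_⟩
  have hmem : ∀ v ∈ G.verts, v ≠ r → s(P v, v) ∈ parentEdges P G.verts r :=
    fun v hv hvr => Multiset.mem_map_of_mem _ (Finset.mem_erase.mpr ⟨hvr, hv⟩)
  have hnodup := nodup_parentEdges fun v hv hvr => (hP v hv hvr).2
  have hle : parentEdges P G.verts r ≤ G.edges := by
    refine (Multiset.le_iff_subset hnodup).mpr fun e he => ?_
    obtain ⟨v, hv, rfl⟩ := Multiset.mem_map.mp he
    obtain ⟨hvr, hv⟩ := Finset.mem_erase.mp hv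
    exact adjGraph_adj.mp (hP v hv hvr).1
  by_contra hne
  obtain ⟨e, hcons⟩ := Multiset.lt_iff_cons_le.mp (lt_of_le_of_ne hle hne)
  have he : e ∈ G.edges := Multiset.mem_of_le hcons (Multiset.mem_cons_self e _)
  have hle' : parentEdges P G.verts r ≤ G.edges.erase e := by
    simpa using Multiset.erase_le_erase e hcons
  refine hmin.2 e he ((feasible_one_iff (G := G.delEdge e) hr).mpr fun s hs => ?_)
  refine reachable_of_descent (G := G.delEdge e) (G.adjGraph.dist r) hr
    (fun v hv hvr => ⟨P v, Multiset.mem_of_le hle' (hmem v hv hvr), (hP v hv hvr).2⟩) (hS hs)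

theorem card_verts_of_minimal {G : MGraph α} {r : α} {S : Finset α} (hrS : r ∉ S)
    (hr : r ∈ G.verts) (hS : ↑S ⊆ (G.verts : Set α)) (h3 : G.ThreeRegularInstance r S 1)
    (hmin : G.MinimalInstance r S 1) : G.verts.card = 2 * S.card := by
  obtain ⟨P, hP⟩ := exists_parentEdges_eq_edges_of_minimal hr hS h3 hmin
  have hedges : Multiset.card G.edges + 1 = G.verts.card := by
    rw [← hP, parentEdges, Multiset.card_map, ← Finset.card_def, Finset.card_erase_add_one hr]
  have hsub : insert r S ⊆ G.verts := Finset.insert_subset hr hS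
  have hrest : ∀ v ∈ G.verts \ insert r S, G.deg v = 3 := by
    intro v hv
    obtain ⟨hv, hvrS⟩ := Finset.mem_sdiff.mp hv
    exact h3.2.2 v hv (fun h => hvrS (h ▸ Finset.mem_insert_self r S))
      (fun h => hvrS (Finset.mem_insert_of_mem h))
  have hsum := G.sum_deg_eq_two_mul_card_edges
  rw [← Finset.sum_sdiff hsub, Finset.sum_congr rfl hrest, Finset.sum_insert hrS, h3.1,
    Finset.sum_congr rfl h3.2.1, Finset.sum_const, Finset.sum_const,
    Finset.card_sdiff_of_subset hsub,
    Finset.card_insert_of_notMem hrS, smul_eq_mul, smul_eq_mul] at hsum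
  have hcard := Finset.card_le_card hsub
  rw [Finset.card_insert_of_notMem hrS] at hcard
  omega

def treeGraph (P : α → α) (V : Finset α) (r : α) (hmem : ∀ v ∈ V, P v ∈ V)
    (hne : ∀ v ∈ V, v ≠ r → P v ≠ v) : MGraph α where
  verts := V
  edges := parentEdges P V r
  mem_verts := by
    intro e he x hx
    obtain ⟨v, hv, rfl⟩ := Multiset.mem_map.mp he
    have hv := Finset.mem_of_mem_erase hv
    rcases Sym2.mem_iff.mp hx with rfl | rfl
    exacts [hmem v hv, hv]
  loopless := by
    intro e he
    obtain ⟨v, hv, rfl⟩ := Multiset.mem_map.mp he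
    simpa using hne v (Finset.mem_of_mem_erase hv) (Finset.ne_of_mem_erase hv)

section treeGraph

variable {P : α → α} {V : Finset α} {r : α} {hmem : ∀ v ∈ V, P v ∈ V}
  {hne : ∀ v ∈ V, v ≠ r → P v ≠ v}

theorem deg_treeGraph (v : α) :
    (treeGraph P V r hmem hne).deg v = ((V.erase r).filter fun u => v = P u ∨ v = u).card := by
  simp [deg, treeGraph, parentEdges, Multiset.filter_map, Finset.card_def, Finset.filter_val]

/-- Every edge `s(P u, u)` other than `s(P w, w)` joins two vertices that are both descendants of
`w` or both not, and the root is not a descendant of `w`. -/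
theorem not_reachable_delEdge_treeGraph {d : α → ℕ} (hPr : P r = r)
    (hd : ∀ v ∈ V, v ≠ r → d (P v) < d v) {w s : α} (hwr : w ≠ r) {k : ℕ} (hk : P^[k] s = w) :
    ¬ ((treeGraph P V r hmem hne).delEdge s(P w, w)).adjGraph.Reachable r s := by
  intro hrs
  refine induction_of_reachable (Q := fun x => ¬ ∃ k, P^[k] x = w) (fun x y hxy hx hy => ?_) ?_ hrs
    ⟨k, hk⟩
  · obtain ⟨hne', hxy⟩ := (Multiset.Nodup.mem_erase_iff (nodup_parentEdges hd)).mp hxy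
    obtain ⟨u, -, hu⟩ := Multiset.mem_map.mp hxy
    obtain ⟨j, hj⟩ := hy
    have huw : u ≠ w := by rintro rfl; exact hne' hu.symm
    rcases Sym2.eq_iff.mp hu with ⟨rfl, rfl⟩ | ⟨rfl, rfl⟩
    · obtain _ | j := j
      · exact huw hj
      · exact hx ⟨j, by rwa [← Function.iterate_succ_apply]⟩
    · exact hx ⟨j + 1, by rwa [Function.iterate_succ_apply]⟩
  · rintro ⟨j, hj⟩
    exact hwr (hj ▸ Function.iterate_fixed hPr j)

theorem minimalInstance_treeGraph {S : Finset α} {d : α → ℕ} (hr : r ∈ V) (hPr : P r = r)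
    (hSV : S ⊆ V) (hd : ∀ v ∈ V, v ≠ r → d (P v) < d v)
    (hdesc : ∀ w ∈ V, w ≠ r → ∃ s ∈ S, ∃ k, P^[k] s = w) :
    (treeGraph P V r hmem hne).MinimalInstance r S 1 := by
  refine ⟨(feasible_one_iff hr).mpr fun s hs => ?_, fun e he hfeas => ?_⟩
  · refine reachable_of_descent d hr (fun v hv hvr => ⟨P v, ?_, hd v hv hvr⟩) (hSV hs)
    exact Multiset.mem_map_of_mem _ (Finset.mem_erase.mpr ⟨hvr, hv⟩)
  · obtain ⟨w, hw, rfl⟩ := Multiset.mem_map.mp he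
    obtain ⟨hwr, hw⟩ := Finset.mem_erase.mp hw
    obtain ⟨s, hs, k, hk⟩ := hdesc w hw hwr
    exact not_reachable_delEdge_treeGraph hPr hd hwr hk
      ((feasible_one_iff (G := (treeGraph P V r hmem hne).delEdge _) hr).mp hfeas s hs)

end treeGraph

end DecidableEq

end MGraph

/-- The parent map of a caterpillar on `range (2 * t)`: the root `0` and the internal vertices
`1, …, t - 1` form a path, and the terminal `t + j` hangs from `j + 1`, except that the last
terminal `2 * t - 1` hangs from `t - 1`. -/
def caterpillarParent (t v : ℕ) : ℕ := if v < t then v - 1 else min (v - t + 1) (t - 1)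

def caterpillar (t : ℕ) : MGraph ℕ :=
  MGraph.treeGraph (caterpillarParent t) (Finset.range (2 * t)) 0
    (fun v hv => by
      simp only [Finset.mem_range, caterpillarParent] at hv ⊢
      split_ifs <;> omega)
    (fun v _ hv => by
      simp only [caterpillarParent]
      split_ifs <;> omega)

@[simp]
theorem verts_caterpillar (t : ℕ) : (caterpillar t).verts = Finset.range (2 * t) := rfl

theorem caterpillar_threeRegularInstance {t : ℕ} (ht : 0 < t) :
    (caterpillar t).ThreeRegularInstance 0 (Finset.Ico t (2 * t)) 1 := by
  refine ⟨?_, fun s hs => ?_, fun v hv hv0 hvS => ?_⟩ <;>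
    simp only [caterpillar, MGraph.deg_treeGraph]
  · refine Finset.card_eq_one.mpr ⟨1, ?_⟩
    ext u
    rw [Finset.mem_filter]
    simp only [Finset.mem_erase, Finset.mem_range, Finset.mem_singleton,
      caterpillarParent]
    split_ifs <;> omega
  · rw [Finset.mem_Ico] at hs
    refine Finset.card_eq_one.mpr ⟨s, ?_⟩
    ext u
    rw [Finset.mem_filter]
    simp only [Finset.mem_erase, Finset.mem_range, Finset.mem_singleton,
      caterpillarParent]
    split_ifs <;> omega
  · rw [verts_caterpillar, Finset.mem_range] at hv
    rw [Finset.mem_Ico] at hvS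
    refine Finset.card_eq_three.mpr
      ⟨v, (t + v - 1 : ℕ), (if v + 1 < t then v + 1 else 2 * t - 1 : ℕ), by omega,
        by split_ifs <;> omega, by split_ifs <;> omega, ?_⟩
    ext u
    rw [Finset.mem_filter]
    simp only [Finset.mem_erase, Finset.mem_range, Finset.mem_insert,
      Finset.mem_singleton, caterpillarParent]
    split_ifs <;> omega

theorem caterpillar_minimalInstance {t : ℕ} (ht : 0 < t) :
    (caterpillar t).MinimalInstance 0 (Finset.Ico t (2 * t)) 1 := by
  refine MGraph.minimalInstance_treeGraph (d := id) (by simpa using ht)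
    (by simp [caterpillarParent, ht]) ?_ ?_ ?_
  · intro s
    simp only [Finset.mem_Ico, Finset.mem_range]
    omega
  · intro v hv hv0
    simp only [Finset.mem_range, caterpillarParent, id] at hv ⊢
    split_ifs <;> omega
  · intro w hw hw0
    rw [Finset.mem_range] at hw
    by_cases hwt : t ≤ w
    · exact ⟨w, Finset.mem_Ico.mpr ⟨hwt, hw⟩, 0, rfl⟩
    · refine ⟨t + w - 1, Finset.mem_Ico.mpr ⟨by omega, by omega⟩, 1, ?_⟩
      simp only [Function.iterate_one, caterpillarParent]
      split_ifs <;> omega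

/-- For every positive integer `t`, every minimal `3`-regular
instance of Steiner Rooted `1`-Orientation with `t` terminals has exactly `2t`
vertices; in particular (such instances exist and) the maximum number `N_{1,t}` of
vertices of such an instance equals `2t`. -/
theorem minimal_instance_k_one (t : ℕ) (ht : 0 < t) :
    (∀ (α : Type) [DecidableEq α] (G : MGraph α) (r : α) (S : Finset α),
      r ∉ S → S.card = t → r ∈ G.verts → ↑S ⊆ (G.verts : Set α) →
      G.ThreeRegularInstance r S 1 → G.MinimalInstance r S 1 →
      G.verts.card = 2 * t) ∧
    (∃ (G : MGraph ℕ) (r : ℕ) (S : Finset ℕ),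
      r ∉ S ∧ S.card = t ∧ r ∈ G.verts ∧ ↑S ⊆ (G.verts : Set ℕ) ∧
      G.ThreeRegularInstance r S 1 ∧ G.MinimalInstance r S 1 ∧
      G.verts.card = 2 * t) := by
  refine ⟨fun α _ G r S hrS hS hr hSV h3 hmin => ?_, ?_⟩
  · rw [← hS]
    exact MGraph.card_verts_of_minimal hrS hr hSV h3 hmin
  · refine ⟨caterpillar t, 0, Finset.Ico t (2 * t), by simp, by simp; omega, ?_, ?_,
      caterpillar_threeRegularInstance ht, caterpillar_minimalInstance ht, ?_⟩
    · simpa using ht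
    · intro s hs
      simp only [Finset.coe_Ico, Set.mem_Ico, verts_caterpillar, Finset.coe_range,
        Set.mem_Iio] at hs ⊢
      omega
    · simp
end
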